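/- arXiv:2406.10468 — 9 statements merged into one kernel-verified Lean document; each statement's English description precedes it below -/
import Mathlib

section
/- For a finite-dimensional quantum system with Hamiltonian H and state ρ, the ergotropy E(ρ) = tr(ρH) − min over unitaries U of tr(UρU†H) is achieved by the unitary that maps ρ to its passive state ρ↓ = Σ_k λ_k |E_k⟩⟨E_k|, where |E_k⟩ are eigenvectors of H with eigenvalues ordered increasingly and λ_k are the eigenvalues of ρ ordered decreasingly. That is, E(ρ) = tr[(ρ − ρ↓)H]. -/
open Matrix Kronecker
open scoped ComplexOrder

noncomputable def ergotropy {n : Type*} [Fintype n] [DecidableEq n]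
    (H ρ : Matrix n n ℂ) : ℝ :=
  (Matrix.trace (ρ * H)).re -
    sInf {x : ℝ | ∃ U ∈ Matrix.unitaryGroup n ℂ,
      x = (Matrix.trace (U * ρ * star U * H)).re}

def IsDensityMatrix {n : Type*} [Fintype n] (ρ : Matrix n n ℂ) : Prop :=
  ρ.PosSemidef ∧ ρ.trace = 1

/-- Entrywise expansion of `tr(M D_b M* D_a)`. -/
lemma trace_conj_diag_expand {n : ℕ} (M : Matrix (Fin n) (Fin n) ℂ) (a b : Fin n → ℂ) :
    Matrix.trace (M * Matrix.diagonal b * star M * Matrix.diagonal a)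
      = ∑ i, ∑ j, (M i j * star (M i j)) * (b j * a i) := by
  simp only [Matrix.trace, Matrix.diag, Matrix.mul_apply, Matrix.diagonal_apply,
    Matrix.star_apply, Finset.sum_mul, Finset.mul_sum, ite_mul, mul_ite, mul_zero, zero_mul,
    Finset.sum_ite_eq, Finset.sum_ite_eq', Finset.mem_univ, if_true]
  refine Finset.sum_congr rfl fun i _ => Finset.sum_congr rfl fun j _ => ?_
  ring

/-- Reduce a conjugated trace to the canonical form `tr(M D_b M* D_a)`. -/
lemma trace_conj_reduce {n : ℕ} (U V W : Matrix (Fin n) (Fin n) ℂ)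
    (hV : V ∈ Matrix.unitaryGroup (Fin n) ℂ) (a b : Fin n → ℂ) :
    Matrix.trace (U * (W * Matrix.diagonal b * star W) * star U
        * (V * Matrix.diagonal a * star V))
      = Matrix.trace ((star V * U * W) * Matrix.diagonal b * star (star V * U * W)
          * Matrix.diagonal a) := by
  have h1 : V * star V = 1 := (Unitary.mem_iff.mp hV).2
  have h2 : star V * V = 1 := (Unitary.mem_iff.mp hV).1
  have key : U * (W * Matrix.diagonal b * star W) * star U * (V * Matrix.diagonal a * star V)
      = V * ((star V * U * W) * Matrix.diagonal b * star (star V * U * W)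
        * Matrix.diagonal a) * star V := by
    simp only [StarMul.star_mul, star_star, Matrix.mul_assoc]
    rw [← Matrix.mul_assoc V (star V), h1, Matrix.one_mul]
  rw [key, Matrix.trace_mul_comm, ← Matrix.mul_assoc, ← Matrix.mul_assoc, h2, Matrix.one_mul]

/-- Lower bound on a bilinear form against a doubly stochastic matrix, via Birkhoff's
theorem and the rearrangement inequality. -/
lemma doublyStochastic_bilinear_lb {n : ℕ} (e lam : Fin n → ℝ)
    (he : Monotone e) (hlam : Antitone lam)
    (D : Matrix (Fin n) (Fin n) ℝ) (hD : D ∈ doublyStochastic ℝ (Fin n)) :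
    ∑ i, lam i * e i ≤ ∑ i, ∑ j, D i j * (lam j * e i) := by
  obtain ⟨w, hw0, hw1, hwD⟩ := exists_eq_sum_perm_of_mem_doublyStochastic hD
  have hav : Antivary lam e := by
    intro i j h
    exact hlam (le_of_not_gt fun hj => absurd (he hj.le) (not_le.mpr h))
  have hDij : ∀ i j, D i j = ∑ σ : Equiv.Perm (Fin n), w σ * (σ.permMatrix ℝ) i j := by
    intro i j
    rw [← hwD]
    simp only [Matrix.sum_apply, Matrix.smul_apply, smul_eq_mul]
  have hR : ∑ i, ∑ j, D i j * (lam j * e i)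
      = ∑ σ : Equiv.Perm (Fin n), w σ * ∑ i, lam (σ i) * e i := by
    simp only [hDij, Finset.sum_mul]
    calc ∑ i, ∑ j, ∑ σ : Equiv.Perm (Fin n), w σ * (σ.permMatrix ℝ) i j * (lam j * e i)
        = ∑ i, ∑ σ : Equiv.Perm (Fin n), ∑ j, w σ * (σ.permMatrix ℝ) i j * (lam j * e i) :=
          Finset.sum_congr rfl fun i _ => Finset.sum_comm
      _ = ∑ σ : Equiv.Perm (Fin n), ∑ i, ∑ j, w σ * (σ.permMatrix ℝ) i j * (lam j * e i) :=
          Finset.sum_comm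
      _ = ∑ σ : Equiv.Perm (Fin n), w σ * ∑ i, lam (σ i) * e i := by
          refine Finset.sum_congr rfl fun σ _ => ?_
          rw [Finset.mul_sum]
          refine Finset.sum_congr rfl fun i _ => ?_
          simp [Equiv.Perm.permMatrix, PEquiv.toMatrix_apply, Equiv.toPEquiv_apply,
            mul_ite, ite_mul, Finset.sum_ite_eq, Finset.sum_ite_eq']
  rw [hR]
  calc ∑ i, lam i * e i
      = ∑ σ : Equiv.Perm (Fin n), w σ * ∑ i, lam i * e i := by
        rw [← Finset.sum_mul, hw1, one_mul]
    _ ≤ ∑ σ : Equiv.Perm (Fin n), w σ * ∑ i, lam (σ i) * e i := by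
        refine Finset.sum_le_sum fun σ _ => mul_le_mul_of_nonneg_left ?_ (hw0 σ)
        simpa [smul_eq_mul] using hav.sum_smul_le_sum_comp_perm_smul (σ := σ)

/-- Real part of the canonical trace form, as a real double sum. -/
lemma trace_form_re {n : ℕ} (M : Matrix (Fin n) (Fin n) ℂ) (e lam : Fin n → ℝ) :
    (Matrix.trace (M * Matrix.diagonal (fun i => (lam i : ℂ)) * star M
        * Matrix.diagonal (fun i => (e i : ℂ)))).re
      = ∑ i, ∑ j, Complex.normSq (M i j) * (lam j * e i) := by
  rw [trace_conj_diag_expand]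
  rw [Complex.re_sum]
  refine Finset.sum_congr rfl fun i _ => ?_
  rw [Complex.re_sum]
  refine Finset.sum_congr rfl fun j _ => ?_
  rw [show (M i j * star (M i j)) * ((lam j : ℂ) * (e i : ℂ))
      = ((Complex.normSq (M i j) * (lam j * e i) : ℝ) : ℂ) by
    rw [Complex.star_def, Complex.mul_conj]
    push_cast
    ring]
  exact Complex.ofReal_re _

/-- The squared moduli of a unitary matrix form a doubly stochastic matrix. -/
lemma unitary_normSq_doublyStochastic {n : ℕ} (M : Matrix (Fin n) (Fin n) ℂ)
    (hM : M ∈ Matrix.unitaryGroup (Fin n) ℂ) :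
    (Matrix.of fun i j => Complex.normSq (M i j)) ∈ doublyStochastic ℝ (Fin n) := by
  have hM1 : star M * M = 1 := (Unitary.mem_iff.mp hM).1
  have hM2 : M * star M = 1 := (Unitary.mem_iff.mp hM).2
  rw [mem_doublyStochastic_iff_sum]
  refine ⟨fun i j => Complex.normSq_nonneg _, fun i => ?_, fun j => ?_⟩
  · have h : (M * star M) i i = 1 := by rw [hM2]; simp
    rw [Matrix.mul_apply] at h
    have h2 : (∑ j, M i j * star (M i j)) = ((1 : ℝ) : ℂ) := by
      simpa [Matrix.star_apply] using h
    have h3 : ∑ j, M i j * star (M i j)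
        = ((∑ j, Complex.normSq (M i j) : ℝ) : ℂ) := by
      push_cast
      refine Finset.sum_congr rfl fun j _ => ?_
      rw [Complex.star_def, Complex.mul_conj]
    rw [h3] at h2
    exact_mod_cast h2
  · have h : (star M * M) j j = 1 := by rw [hM1]; simp
    rw [Matrix.mul_apply] at h
    have h2 : (∑ i, star (M i j) * M i j) = ((1 : ℝ) : ℂ) := by
      simpa [Matrix.star_apply] using h
    have h3 : ∑ i, star (M i j) * M i j
        = ((∑ i, Complex.normSq (M i j) : ℝ) : ℂ) := by
      push_cast
      refine Finset.sum_congr rfl fun i _ => ?_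
      rw [Complex.star_def, mul_comm, Complex.mul_conj]
    rw [h3] at h2
    exact_mod_cast h2

/-- The ergotropy is achieved by the unitary mapping `ρ` to its passive
state `ρ↓ = V * diagonal λ * V†`, pairing the decreasingly ordered eigenvalues `λ` of `ρ`
with the increasingly ordered eigenvalues `e` of `H` (whose eigenbasis is given by the
unitary `V`). -/
theorem ergotropy_eq_trace_sub_passive {n : ℕ}
    (H ρ : Matrix (Fin n) (Fin n) ℂ) (hH : H.IsHermitian) (hρ : IsDensityMatrix ρ)
    (e : Fin n → ℝ) (he : Monotone e)
    (lam : Fin n → ℝ) (hlam : Antitone lam)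
    (V : Matrix (Fin n) (Fin n) ℂ) (hV : V ∈ Matrix.unitaryGroup (Fin n) ℂ)
    (hHeig : H = V * Matrix.diagonal (fun i => (e i : ℂ)) * star V)
    (W : Matrix (Fin n) (Fin n) ℂ) (hW : W ∈ Matrix.unitaryGroup (Fin n) ℂ)
    (hρeig : ρ = W * Matrix.diagonal (fun i => (lam i : ℂ)) * star W) :
    ergotropy H ρ =
      (Matrix.trace
        ((ρ - V * Matrix.diagonal (fun i => (lam i : ℂ)) * star V) * H)).re := by
  set Dl := Matrix.diagonal (fun i => (lam i : ℂ)) with hDl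
  set De := Matrix.diagonal (fun i => (e i : ℂ)) with hDe
  set c : ℝ := ∑ i, lam i * e i with hc
  have hW1 : star W * W = 1 := (Unitary.mem_iff.mp hW).1
  have hW2 : W * star W = 1 := (Unitary.mem_iff.mp hW).2
  -- the value achieved by any unitary U
  have hval : ∀ U : Matrix (Fin n) (Fin n) ℂ,
      (Matrix.trace (U * ρ * star U * H)).re
        = ∑ i, ∑ j, Complex.normSq ((star V * U * W) i j) * (lam j * e i) := by
    intro U
    rw [hρeig, hHeig, trace_conj_reduce U V W hV, trace_form_re]
  -- the passive unitary
  set U₀ := V * star W with hU₀def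
  have hU₀ : U₀ ∈ Matrix.unitaryGroup (Fin n) ℂ := mul_mem hV (Unitary.star_mem hW)
  have hM₀ : star V * U₀ * W = 1 := by
    have h2 : star V * V = 1 := (Unitary.mem_iff.mp hV).1
    rw [hU₀def, ← Matrix.mul_assoc, h2, Matrix.one_mul, hW1]
  have hval₀ : (Matrix.trace (U₀ * ρ * star U₀ * H)).re = c := by
    rw [hval U₀, hM₀, hc]
    rw [Finset.sum_comm]
    refine Finset.sum_congr rfl fun j _ => ?_
    simp [Matrix.one_apply, apply_ite Complex.normSq, Finset.sum_ite_eq, mul_comm]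
  -- the infimum set
  set S := {x : ℝ | ∃ U ∈ Matrix.unitaryGroup (Fin n) ℂ,
      x = (Matrix.trace (U * ρ * star U * H)).re} with hS
  have hmem : c ∈ S := ⟨U₀, hU₀, hval₀.symm⟩
  have hlb : ∀ x ∈ S, c ≤ x := by
    rintro x ⟨U, hU, rfl⟩
    rw [hval U]
    set M := star V * U * W with hMdef
    have hMu : M ∈ Matrix.unitaryGroup (Fin n) ℂ :=
      mul_mem (mul_mem (Unitary.star_mem hV) hU) hW
    exact doublyStochastic_bilinear_lb e lam he hlam _ (unitary_normSq_doublyStochastic M hMu)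
  have hInf : sInf S = c := le_antisymm (csInf_le ⟨c, hlb⟩ hmem) (le_csInf ⟨c, hmem⟩ hlb)
  -- the passive-state trace
  have hpassive : (Matrix.trace (V * Dl * star V * H)).re = c := by
    have hmat : U₀ * ρ * star U₀ = V * Dl * star V := by
      rw [hρeig, hU₀def]
      simp only [StarMul.star_mul, star_star, Matrix.mul_assoc]
      rw [← Matrix.mul_assoc (star W) W, hW1, Matrix.one_mul,
        ← Matrix.mul_assoc (star W) W, hW1, Matrix.one_mul]
    rw [← hmat]
    exact hval₀
  -- conclude
  rw [ergotropy, ← hS, hInf, Matrix.sub_mul, Matrix.trace_sub, Complex.sub_re, hpassive]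
end

section
/- The ergotropic gap is nonnegative: for a bipartite system BC with noninteracting Hamiltonian H_{BC} = H_B ⊗ 1 + 1 ⊗ H_C and any joint state ρ_{BC} with marginals ρ_B, ρ_C, one has E(ρ_{BC}) ≥ E(ρ_B) + E(ρ_C), where ergotropies on B and C are computed with respect to H_B and H_C. -/
open Matrix Kronecker
open scoped ComplexOrder

noncomputable def ptraceC {dB dC : Type*} [Fintype dB] [Fintype dC]
    (ρ : Matrix (dB × dC) (dB × dC) ℂ) : Matrix dB dB ℂ :=
  Matrix.of fun i j => ∑ k, ρ (i, k) (j, k)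

noncomputable def ptraceB {dB dC : Type*} [Fintype dB] [Fintype dC]
    (ρ : Matrix (dB × dC) (dB × dC) ℂ) : Matrix dC dC ℂ :=
  Matrix.of fun i j => ∑ k, ρ (k, i) (k, j)

section helpers

variable {dB dC : Type*} [Fintype dB] [Fintype dC] [DecidableEq dB] [DecidableEq dC]

lemma trace_mul_kron_one (σ : Matrix (dB × dC) (dB × dC) ℂ) (A : Matrix dB dB ℂ) :
    Matrix.trace (σ * (A ⊗ₖ (1 : Matrix dC dC ℂ))) = Matrix.trace (ptraceC σ * A) := by
  simp only [Matrix.trace, Matrix.diag, Matrix.mul_apply, ptraceC, Matrix.of_apply,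
    Matrix.kroneckerMap_apply, Matrix.one_apply, Fintype.sum_prod_type, mul_ite, mul_one,
    mul_zero, Finset.sum_ite_irrel, Finset.sum_const_zero,
    Finset.sum_ite_eq', Finset.mem_univ, if_true, Finset.sum_mul]
  exact Finset.sum_congr rfl fun x _ => Finset.sum_comm

lemma trace_mul_one_kron (σ : Matrix (dB × dC) (dB × dC) ℂ) (A : Matrix dC dC ℂ) :
    Matrix.trace (σ * ((1 : Matrix dB dB ℂ) ⊗ₖ A)) = Matrix.trace (ptraceB σ * A) := by
  simp only [Matrix.trace, Matrix.diag, Matrix.mul_apply, ptraceB, Matrix.of_apply,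
    Matrix.kroneckerMap_apply, Matrix.one_apply, Fintype.sum_prod_type, ite_mul, one_mul,
    zero_mul, mul_ite, mul_zero, Finset.sum_ite_irrel, Finset.sum_const_zero,
    Finset.sum_ite_eq', Finset.mem_univ, if_true, Finset.sum_mul]
  rw [Finset.sum_comm]
  exact Finset.sum_congr rfl fun x1 _ => Finset.sum_comm

omit [Fintype dB] [Fintype dC] [DecidableEq dB] [DecidableEq dC] in
lemma star_kron (U : Matrix dB dB ℂ) (V : Matrix dC dC ℂ) :
    star (U ⊗ₖ V) = star U ⊗ₖ star V := by
  ext ⟨i, k⟩ ⟨j, l⟩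
  simp [Matrix.conjTranspose_apply, Matrix.kroneckerMap_apply, mul_comm]

lemma kron_mem_unitary {U : Matrix dB dB ℂ} {V : Matrix dC dC ℂ}
    (hU : U ∈ Matrix.unitaryGroup dB ℂ) (hV : V ∈ Matrix.unitaryGroup dC ℂ) :
    U ⊗ₖ V ∈ Matrix.unitaryGroup (dB × dC) ℂ := by
  rw [Matrix.mem_unitaryGroup_iff] at *
  rw [star_kron, ← Matrix.mul_kronecker_mul, hU, hV, Matrix.one_kronecker_one]

end helpers

section gen

variable {n : Type*} [Fintype n] [DecidableEq n]

lemma trace_conjCycle (U ρ A : Matrix n n ℂ) :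
    Matrix.trace (U * ρ * star U * A) = Matrix.trace (ρ * (star U * A * U)) := by
  calc Matrix.trace (U * ρ * star U * A)
      = Matrix.trace ((U * ρ) * (star U * A)) := by rw [mul_assoc]
    _ = Matrix.trace ((star U * A) * (U * ρ)) := Matrix.trace_mul_comm _ _
    _ = Matrix.trace ((star U * A * U) * ρ) := by simp only [mul_assoc]
    _ = Matrix.trace (ρ * (star U * A * U)) := Matrix.trace_mul_comm _ _

lemma trace_re_lb (H ρ : Matrix n n ℂ) {U : Matrix n n ℂ}
    (hU : U ∈ Matrix.unitaryGroup n ℂ) :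
    -((∑ a, ∑ b, ‖ρ a b‖) * (∑ a, ∑ b, ‖H a b‖)) ≤ (Matrix.trace (U * ρ * star U * H)).re := by
  have hM : ∀ i j, ‖(U * ρ * star U) i j‖ ≤ ∑ a, ∑ b, ‖ρ a b‖ := by
    intro i j
    have hrw : (U * ρ * star U) i j = ∑ b, ∑ a, U i a * ρ a b * (star U) b j := by
      simp [Matrix.mul_apply, Finset.sum_mul]
    rw [hrw]
    calc ‖∑ b, ∑ a, U i a * ρ a b * (star U) b j‖
        ≤ ∑ b, ∑ a, ‖U i a * ρ a b * (star U) b j‖ :=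
          (norm_sum_le _ _).trans (Finset.sum_le_sum fun _ _ => norm_sum_le _ _)
      _ ≤ ∑ b, ∑ a, ‖ρ a b‖ := by
          refine Finset.sum_le_sum fun b _ => Finset.sum_le_sum fun a _ => ?_
          rw [norm_mul, norm_mul]
          have h1 := entry_norm_bound_of_unitary hU i a
          have h2 : ‖(star U) b j‖ ≤ 1 := by
            rw [Matrix.star_apply, norm_star]
            exact entry_norm_bound_of_unitary hU j b
          have h3 : ‖U i a‖ * ‖ρ a b‖ ≤ ‖ρ a b‖ :=
            mul_le_of_le_one_left (norm_nonneg _) h1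
          have h4 : ‖U i a‖ * ‖ρ a b‖ * ‖(star U) b j‖ ≤ ‖U i a‖ * ‖ρ a b‖ :=
            mul_le_of_le_one_right (mul_nonneg (norm_nonneg _) (norm_nonneg _)) h2
          linarith
      _ = ∑ a, ∑ b, ‖ρ a b‖ := Finset.sum_comm
  have hb : ‖Matrix.trace (U * ρ * star U * H)‖ ≤
      (∑ a, ∑ b, ‖ρ a b‖) * (∑ a, ∑ b, ‖H a b‖) := by
    have htr : Matrix.trace (U * ρ * star U * H) = ∑ i, ∑ j, (U * ρ * star U) i j * H j i := by
      simp [Matrix.trace, Matrix.diag, Matrix.mul_apply]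
    rw [htr]
    calc ‖∑ i, ∑ j, (U * ρ * star U) i j * H j i‖
        ≤ ∑ i, ∑ j, ‖(U * ρ * star U) i j * H j i‖ :=
          (norm_sum_le _ _).trans (Finset.sum_le_sum fun _ _ => norm_sum_le _ _)
      _ ≤ ∑ i, ∑ j, (∑ a, ∑ b, ‖ρ a b‖) * ‖H j i‖ := by
          refine Finset.sum_le_sum fun i _ => Finset.sum_le_sum fun j _ => ?_
          rw [norm_mul]
          exact mul_le_mul_of_nonneg_right (hM i j) (norm_nonneg _)
      _ = (∑ a, ∑ b, ‖ρ a b‖) * (∑ i, ∑ j, ‖H j i‖) := by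
          simp [Finset.mul_sum]
      _ = (∑ a, ∑ b, ‖ρ a b‖) * (∑ a, ∑ b, ‖H a b‖) := by
          congr 1
          exact Finset.sum_comm
  have h2 := Complex.abs_re_le_norm (Matrix.trace (U * ρ * star U * H))
  have := neg_abs_le (Matrix.trace (U * ρ * star U * H)).re
  linarith

end gen

/-- The ergotropic gap is nonnegative:
`E(ρ_BC) ≥ E(ρ_B) + E(ρ_C)` for the noninteracting Hamiltonian
`H_BC = H_B ⊗ 1 + 1 ⊗ H_C`. -/
theorem ergotropic_gap_nonneg {dB dC : ℕ}
    (HB : Matrix (Fin dB) (Fin dB) ℂ) (HC : Matrix (Fin dC) (Fin dC) ℂ)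
    (hHB : HB.IsHermitian) (hHC : HC.IsHermitian)
    (ρ : Matrix (Fin dB × Fin dC) (Fin dB × Fin dC) ℂ) (hρ : IsDensityMatrix ρ) :
    ergotropy HB (ptraceC ρ) + ergotropy HC (ptraceB ρ) ≤
      ergotropy (HB ⊗ₖ (1 : Matrix (Fin dC) (Fin dC) ℂ)
        + (1 : Matrix (Fin dB) (Fin dB) ℂ) ⊗ₖ HC) ρ := by
  classical
  set K : Matrix (Fin dB × Fin dC) (Fin dB × Fin dC) ℂ :=
    HB ⊗ₖ (1 : Matrix (Fin dC) (Fin dC) ℂ) + (1 : Matrix (Fin dB) (Fin dB) ℂ) ⊗ₖ HC with hK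
  set SB : Set ℝ := {x : ℝ | ∃ U ∈ Matrix.unitaryGroup (Fin dB) ℂ,
      x = (Matrix.trace (U * ptraceC ρ * star U * HB)).re} with hSB
  set SC : Set ℝ := {x : ℝ | ∃ U ∈ Matrix.unitaryGroup (Fin dC) ℂ,
      x = (Matrix.trace (U * ptraceB ρ * star U * HC)).re} with hSC
  set SBC : Set ℝ := {x : ℝ | ∃ U ∈ Matrix.unitaryGroup (Fin dB × Fin dC) ℂ,
      x = (Matrix.trace (U * ρ * star U * K)).re} with hSBC
  -- trace splitting for the non-interacting Hamiltonian
  have htr : (Matrix.trace (ρ * K)).re =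
      (Matrix.trace (ptraceC ρ * HB)).re + (Matrix.trace (ptraceB ρ * HC)).re := by
    rw [hK, mul_add, Matrix.trace_add, trace_mul_kron_one, trace_mul_one_kron, Complex.add_re]
  -- nonemptiness
  have hSBne : SB.Nonempty :=
    ⟨_, ⟨1, Submonoid.one_mem _, rfl⟩⟩
  have hSCne : SC.Nonempty :=
    ⟨_, ⟨1, Submonoid.one_mem _, rfl⟩⟩
  -- SBC is bounded below
  have hbdd : BddBelow SBC := by
    refine ⟨-((∑ a, ∑ b, ‖ρ a b‖) * (∑ a, ∑ b, ‖K a b‖)), ?_⟩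
    rintro x ⟨U, hU, rfl⟩
    exact trace_re_lb K ρ hU
  -- product unitaries give sums of elements
  have hkey : ∀ x ∈ SB, ∀ y ∈ SC, sInf SBC ≤ x + y := by
    rintro x ⟨U, hU, rfl⟩ y ⟨V, hV, rfl⟩
    refine csInf_le hbdd ⟨U ⊗ₖ V, kron_mem_unitary hU hV, ?_⟩
    have hV' : star V * V = 1 := Matrix.mem_unitaryGroup_iff'.mp hV
    have hU' : star U * U = 1 := Matrix.mem_unitaryGroup_iff'.mp hU
    have key1 : star (U ⊗ₖ V) * (HB ⊗ₖ (1 : Matrix (Fin dC) (Fin dC) ℂ)) * (U ⊗ₖ V)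
        = (star U * HB * U) ⊗ₖ (1 : Matrix (Fin dC) (Fin dC) ℂ) := by
      rw [star_kron, ← Matrix.mul_kronecker_mul, ← Matrix.mul_kronecker_mul, mul_one, hV']
    have key2 : star (U ⊗ₖ V) * ((1 : Matrix (Fin dB) (Fin dB) ℂ) ⊗ₖ HC) * (U ⊗ₖ V)
        = (1 : Matrix (Fin dB) (Fin dB) ℂ) ⊗ₖ (star V * HC * V) := by
      rw [star_kron, ← Matrix.mul_kronecker_mul, ← Matrix.mul_kronecker_mul, mul_one, hU']
    have : Matrix.trace ((U ⊗ₖ V) * ρ * star (U ⊗ₖ V) * K)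
        = Matrix.trace (U * ptraceC ρ * star U * HB)
          + Matrix.trace (V * ptraceB ρ * star V * HC) := by
      have expand : star (U ⊗ₖ V) * K * (U ⊗ₖ V)
          = (star U * HB * U) ⊗ₖ (1 : Matrix (Fin dC) (Fin dC) ℂ)
            + (1 : Matrix (Fin dB) (Fin dB) ℂ) ⊗ₖ (star V * HC * V) := by
        rw [hK, mul_add, add_mul, key1, key2]
      rw [trace_conjCycle, expand, mul_add, Matrix.trace_add, trace_mul_kron_one,
        trace_mul_one_kron, trace_conjCycle U (ptraceC ρ) HB, trace_conjCycle V (ptraceB ρ) HC]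
    rw [this, Complex.add_re]
  -- superadditivity of infima
  have hinf : sInf SBC ≤ sInf SB + sInf SC := by
    have h1 : sInf SBC - sInf SB ≤ sInf SC := by
      refine le_csInf hSCne fun y hy => ?_
      have : sInf SBC - y ≤ sInf SB := by
        refine le_csInf hSBne fun x hx => ?_
        linarith [hkey x hx y hy]
      linarith
    linarith
  simp only [ergotropy, ← hSB, ← hSC, ← hSBC, htr]
  linarith
end

section
/- The ergotropic gap depends only on spectra: for noninteracting Hamiltonian H_{BC} = H_B ⊗ 1 + 1 ⊗ H_C, δ_{BC} := E(ρ_{BC}) − E(ρ_B) − E(ρ_C) = tr[(ρ_B↓ ⊗ ρ_C↓ − ρ_{BC}↓) H_{BC}], where ρ↓ denotes the passive state with respect to the corresponding Hamiltonian. -/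
open Matrix Kronecker
open scoped ComplexOrder

section AuxErgotropy

open Finset

variable {n : Type*} [Fintype n] [DecidableEq n]

lemma my_trace_conj (V : Matrix n n ℂ) (hV : V ∈ Matrix.unitaryGroup n ℂ)
    (a b : n → ℂ) :
    Matrix.trace (V * Matrix.diagonal a * star V * (V * Matrix.diagonal b * star V))
      = ∑ i, a i * b i := by
  have h1 : star V * V = 1 := (Matrix.mem_unitaryGroup_iff'.1 hV)
  have h2 : V * star V = 1 := (Matrix.mem_unitaryGroup_iff.1 hV)
  calc Matrix.trace (V * Matrix.diagonal a * star V * (V * Matrix.diagonal b * star V))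
      = Matrix.trace (V * (Matrix.diagonal a * Matrix.diagonal b) * star V) := by
        rw [show V * Matrix.diagonal a * star V * (V * Matrix.diagonal b * star V)
          = V * Matrix.diagonal a * (star V * V) * Matrix.diagonal b * star V by
            noncomm_ring]
        rw [h1]; noncomm_ring
    _ = ∑ i, a i * b i := by
        rw [Matrix.trace_mul_cycle, h1, one_mul, Matrix.diagonal_mul_diagonal,
          Matrix.trace_diagonal]

lemma my_unitary_ds (M : Matrix n n ℂ) (hM : M ∈ Matrix.unitaryGroup n ℂ) :
    (Matrix.of fun i j => Complex.normSq (M i j)) ∈ doublyStochastic ℝ n := by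
  have h1 : star M * M = 1 := (Matrix.mem_unitaryGroup_iff'.1 hM)
  have h2 : M * star M = 1 := (Matrix.mem_unitaryGroup_iff.1 hM)
  rw [mem_doublyStochastic_iff_sum]
  refine ⟨fun i j => Complex.normSq_nonneg _, fun i => ?_, fun j => ?_⟩
  · have := congrArg (fun A => A i i) h2
    simp only [Matrix.mul_apply, Matrix.one_apply_eq, Matrix.star_apply,
      Matrix.conjTranspose_apply] at this
    have : ∑ j, (M i j * (starRingEnd ℂ) (M i j)) = 1 := by
      simpa [Matrix.conjTranspose_apply] using this
    have := congrArg Complex.re this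
    simpa [Complex.mul_conj, Complex.ofReal_re] using this
  · have := congrArg (fun A => A j j) h1
    simp only [Matrix.mul_apply, Matrix.one_apply_eq, Matrix.star_apply,
      Matrix.conjTranspose_apply] at this
    have : ∑ i, ((starRingEnd ℂ) (M i j) * M i j) = 1 := by
      simpa [Matrix.conjTranspose_apply] using this
    have := congrArg Complex.re this
    simpa [mul_comm, Complex.mul_conj, Complex.ofReal_re] using this

lemma my_ds_bound (e lam : n → ℝ) (hA : Antivary lam e)
    (D : Matrix n n ℝ) (hD : D ∈ doublyStochastic ℝ n) :
    ∑ i, lam i * e i ≤ ∑ i, ∑ j, D i j * (lam j * e i) := by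
  have hlin : IsLinearMap ℝ (fun M : Matrix n n ℝ => ∑ i, ∑ j, M i j * (lam j * e i)) := by
    constructor
    · intro x y
      simp [Matrix.add_apply, add_mul, Finset.sum_add_distrib]
    · intro c x
      simp [Matrix.smul_apply, smul_eq_mul, mul_assoc, Finset.mul_sum]
  have hconv : Convex ℝ {M : Matrix n n ℝ |
      ∑ i, lam i * e i ≤ ∑ i, ∑ j, M i j * (lam j * e i)} :=
    convex_halfSpace_ge hlin _
  have hsub : {P : Matrix n n ℝ | ∃ σ : Equiv.Perm n, σ.permMatrix ℝ = P} ⊆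
      {M : Matrix n n ℝ | ∑ i, lam i * e i ≤ ∑ i, ∑ j, M i j * (lam j * e i)} := by
    rintro P ⟨π, rfl⟩
    have hP : ∀ i, ∑ j, (π.permMatrix ℝ) i j * (lam j * e i) = lam (π i) * e i := by
      intro i
      rw [Finset.sum_eq_single (π i)]
      · simp [Equiv.Perm.permMatrix, PEquiv.toMatrix_apply, Equiv.toPEquiv]
      · intro b _ hb
        simp [Equiv.Perm.permMatrix, PEquiv.toMatrix_apply, Equiv.toPEquiv, hb,
          (Ne.symm hb)]
      · simp
    simp only [Set.mem_setOf_eq, hP]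
    exact hA.sum_mul_le_sum_comp_perm_mul (σ := π)
  have := convexHull_min hsub hconv
  have hmem : D ∈ convexHull ℝ {P : Matrix n n ℝ | ∃ σ : Equiv.Perm n, σ.permMatrix ℝ = P} := by
    rw [← doublyStochastic_eq_convexHull_permMatrix]
    exact hD
  exact this hmem

lemma my_orbit_trace (e lam : n → ℝ) (V W U : Matrix n n ℂ)
    (hV : V ∈ Matrix.unitaryGroup n ℂ) :
    Matrix.trace (U * (W * Matrix.diagonal (fun i => (lam i : ℂ)) * star W) * star U
        * (V * Matrix.diagonal (fun i => (e i : ℂ)) * star V))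
      = ((∑ i, ∑ j, Complex.normSq ((star V * U * W) i j) * (lam j * e i) : ℝ) : ℂ) := by
  have h1 : star V * V = 1 := Matrix.mem_unitaryGroup_iff'.1 hV
  have h2 : V * star V = 1 := Matrix.mem_unitaryGroup_iff.1 hV
  set M : Matrix n n ℂ := star V * U * W with hM
  set Dl : Matrix n n ℂ := Matrix.diagonal (fun i => (lam i : ℂ))
  set De : Matrix n n ℂ := Matrix.diagonal (fun i => (e i : ℂ))
  have key : U * (W * Dl * star W) * star U * (V * De * star V)
      = V * (M * Dl * star M * De) * star V := by
    simp only [hM, StarMul.star_mul, star_star, Matrix.mul_assoc]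
    rw [← Matrix.mul_assoc V (star V), h2, Matrix.one_mul]
  rw [key, Matrix.trace_mul_cycle, ← Matrix.mul_assoc, h1, Matrix.one_mul]
  have hdiag : ∀ i, (M * Dl * star M * De) i i
      = ∑ j, M i j * (lam j : ℂ) * (starRingEnd ℂ) (M i j) * (e i : ℂ) := by
    intro i
    rw [Matrix.mul_diagonal]
    rw [show (M * Dl * star M) i i = ∑ j, (M * Dl) i j * (star M) j i from
      Matrix.mul_apply]
    rw [Finset.sum_mul]
    refine Finset.sum_congr rfl fun j _ => ?_
    rw [Matrix.mul_diagonal]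
    simp [Matrix.star_apply, Matrix.conjTranspose_apply]
  rw [Matrix.trace]
  push_cast
  simp only [Matrix.diag_apply, hdiag]
  refine Finset.sum_congr rfl fun i _ => Finset.sum_congr rfl fun j _ => ?_
  rw [show M i j * (lam j : ℂ) * (starRingEnd ℂ) (M i j) * (e i : ℂ)
    = (M i j * (starRingEnd ℂ) (M i j)) * ((lam j : ℂ) * (e i : ℂ)) by ring,
    Complex.mul_conj]

lemma my_sInf_orbit (e lam : n → ℝ) (hA : Antivary lam e)
    (V W : Matrix n n ℂ) (hV : V ∈ Matrix.unitaryGroup n ℂ)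
    (hW : W ∈ Matrix.unitaryGroup n ℂ) :
    sInf {x : ℝ | ∃ U ∈ Matrix.unitaryGroup n ℂ,
      x = (Matrix.trace (U * (W * Matrix.diagonal (fun i => (lam i : ℂ)) * star W) * star U
        * (V * Matrix.diagonal (fun i => (e i : ℂ)) * star V))).re}
    = ∑ i, lam i * e i := by
  set Dl : Matrix n n ℂ := Matrix.diagonal (fun i => (lam i : ℂ)) with hDl
  set De : Matrix n n ℂ := Matrix.diagonal (fun i => (e i : ℂ)) with hDe
  set S : Set ℝ := {x : ℝ | ∃ U ∈ Matrix.unitaryGroup n ℂ,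
      x = (Matrix.trace (U * (W * Dl * star W) * star U * (V * De * star V))).re} with hS
  have hlb : ∀ x ∈ S, ∑ i, lam i * e i ≤ x := by
    rintro x ⟨U, hU, rfl⟩
    rw [my_orbit_trace e lam V W U hV, Complex.ofReal_re]
    have hMu : star V * U * W ∈ Matrix.unitaryGroup n ℂ :=
      mul_mem (mul_mem (Unitary.star_mem hV) hU) hW
    have := my_ds_bound e lam hA _ (my_unitary_ds _ hMu)
    simpa using this
  have hmem : (∑ i, lam i * e i) ∈ S := by
    refine ⟨V * star W, mul_mem hV (Unitary.star_mem hW), ?_⟩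
    have hw1 : star W * W = 1 := Matrix.mem_unitaryGroup_iff'.1 hW
    have hmid : V * star W * (W * Dl * star W) * star (V * star W)
        = V * Dl * star V := by
      have h : V * star W * (W * Dl * star W) * star (V * star W)
          = V * ((star W * W) * Dl * (star W * W)) * star V := by
        simp only [StarMul.star_mul, star_star]; noncomm_ring
      rw [h, hw1, Matrix.one_mul, Matrix.mul_one]
    rw [hmid, my_trace_conj V hV]
    rw [show ∑ i, (lam i : ℂ) * (e i : ℂ) = ((∑ i, lam i * e i : ℝ) : ℂ) by push_cast; rfl]
    rw [Complex.ofReal_re]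
  exact le_antisymm (csInf_le ⟨_, hlb⟩ hmem) (le_csInf ⟨_, hmem⟩ hlb)

lemma my_antivary (e lam : n → ℝ) [LinearOrder n] (he : Monotone e) (hlam : Antitone lam) :
    Antivary lam e := by
  intro i j hij
  rcases le_total i j with h | h
  · exact hlam h
  · exact absurd (he h) (not_le.2 hij)

lemma my_trace_split {dB dC : Type*} [Fintype dB] [Fintype dC] [DecidableEq dB]
    [DecidableEq dC] (ρ : Matrix (dB × dC) (dB × dC) ℂ)
    (A : Matrix dB dB ℂ) (B : Matrix dC dC ℂ) :
    Matrix.trace (ρ * (A ⊗ₖ (1 : Matrix dC dC ℂ) + (1 : Matrix dB dB ℂ) ⊗ₖ B))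
      = Matrix.trace (ptraceC ρ * A) + Matrix.trace (ptraceB ρ * B) := by
  rw [Matrix.mul_add, Matrix.trace_add]
  congr 1
  · simp only [Matrix.trace, Matrix.diag_apply, Matrix.mul_apply, ptraceC,
      Matrix.of_apply, Matrix.kroneckerMap_apply, Matrix.one_apply,
      Fintype.sum_prod_type, mul_ite, mul_one, mul_zero, Finset.sum_ite_eq',
      Finset.mem_univ, if_true, Finset.sum_mul]
    exact Finset.sum_congr rfl fun i _ => Finset.sum_comm
  · simp only [Matrix.trace, Matrix.diag_apply, Matrix.mul_apply, ptraceB,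
      Matrix.of_apply, Matrix.kroneckerMap_apply, Matrix.one_apply,
      Fintype.sum_prod_type, ite_mul, one_mul, zero_mul, mul_ite, mul_one, mul_zero,
      Finset.sum_ite_irrel, Finset.sum_const_zero,
      Finset.sum_ite_eq', Finset.mem_univ, if_true, Finset.sum_mul]
    rw [Finset.sum_comm]
    exact Finset.sum_congr rfl fun k _ => Finset.sum_comm

lemma my_ptraceC_trace {dB dC : Type*} [Fintype dB] [Fintype dC]
    (ρ : Matrix (dB × dC) (dB × dC) ℂ) :
    Matrix.trace (ptraceC ρ) = Matrix.trace ρ := by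
  simp only [Matrix.trace, Matrix.diag_apply, ptraceC, Matrix.of_apply,
    Fintype.sum_prod_type]

lemma my_ptraceB_trace {dB dC : Type*} [Fintype dB] [Fintype dC]
    (ρ : Matrix (dB × dC) (dB × dC) ℂ) :
    Matrix.trace (ptraceB ρ) = Matrix.trace ρ := by
  simp only [Matrix.trace, Matrix.diag_apply, ptraceB, Matrix.of_apply,
    Fintype.sum_prod_type]
  exact Finset.sum_comm

lemma my_trace_conj_single (V : Matrix n n ℂ) (hV : V ∈ Matrix.unitaryGroup n ℂ)
    (a : n → ℂ) :
    Matrix.trace (V * Matrix.diagonal a * star V) = ∑ i, a i := by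
  have h1 : star V * V = 1 := Matrix.mem_unitaryGroup_iff'.1 hV
  rw [Matrix.trace_mul_cycle, h1, Matrix.one_mul, Matrix.trace_diagonal]

end AuxErgotropy

/-- The ergotropic gap depends only on the spectra:
`δ_BC = E(ρ_BC) − E(ρ_B) − E(ρ_C) = tr[(ρ_B↓ ⊗ ρ_C↓ − ρ_BC↓) H_BC]`, where each passive
state `ρ↓` pairs the decreasingly ordered eigenvalues of the state with the increasingly
ordered eigenvalues of the corresponding Hamiltonian. -/
theorem ergotropic_gap_spectral {dB dC : ℕ}
    (HB : Matrix (Fin dB) (Fin dB) ℂ) (HC : Matrix (Fin dC) (Fin dC) ℂ)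
    (ρ : Matrix (Fin dB × Fin dC) (Fin dB × Fin dC) ℂ) (hρ : IsDensityMatrix ρ)
    -- eigen-decomposition of H_B with increasing eigenvalues and of ρ_B with
    -- decreasing eigenvalues
    (eB lamB : Fin dB → ℝ) (heB : Monotone eB) (hlamB : Antitone lamB)
    (VB : Matrix (Fin dB) (Fin dB) ℂ) (hVB : VB ∈ Matrix.unitaryGroup (Fin dB) ℂ)
    (hHB : HB = VB * Matrix.diagonal (fun i => (eB i : ℂ)) * star VB)
    (WB : Matrix (Fin dB) (Fin dB) ℂ) (hWB : WB ∈ Matrix.unitaryGroup (Fin dB) ℂ)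
    (hρB : ptraceC ρ = WB * Matrix.diagonal (fun i => (lamB i : ℂ)) * star WB)
    -- the same data for C
    (eC lamC : Fin dC → ℝ) (heC : Monotone eC) (hlamC : Antitone lamC)
    (VC : Matrix (Fin dC) (Fin dC) ℂ) (hVC : VC ∈ Matrix.unitaryGroup (Fin dC) ℂ)
    (hHC : HC = VC * Matrix.diagonal (fun i => (eC i : ℂ)) * star VC)
    (WC : Matrix (Fin dC) (Fin dC) ℂ) (hWC : WC ∈ Matrix.unitaryGroup (Fin dC) ℂ)
    (hρC : ptraceB ρ = WC * Matrix.diagonal (fun i => (lamC i : ℂ)) * star WC)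
    -- the same data for the composite system, with a common enumeration `σ`
    (σ : Fin (dB * dC) ≃ (Fin dB × Fin dC))
    (eBC lamBC : Fin (dB * dC) → ℝ) (heBC : Monotone eBC) (hlamBC : Antitone lamBC)
    (VBC : Matrix (Fin dB × Fin dC) (Fin dB × Fin dC) ℂ)
    (hVBC : VBC ∈ Matrix.unitaryGroup (Fin dB × Fin dC) ℂ)
    (hHBC : HB ⊗ₖ (1 : Matrix (Fin dC) (Fin dC) ℂ)
        + (1 : Matrix (Fin dB) (Fin dB) ℂ) ⊗ₖ HC
      = VBC * Matrix.diagonal (fun p => (eBC (σ.symm p) : ℂ)) * star VBC)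
    (WBC : Matrix (Fin dB × Fin dC) (Fin dB × Fin dC) ℂ)
    (hWBC : WBC ∈ Matrix.unitaryGroup (Fin dB × Fin dC) ℂ)
    (hρBC : ρ = WBC * Matrix.diagonal (fun p => (lamBC (σ.symm p) : ℂ)) * star WBC) :
    ergotropy (HB ⊗ₖ (1 : Matrix (Fin dC) (Fin dC) ℂ)
        + (1 : Matrix (Fin dB) (Fin dB) ℂ) ⊗ₖ HC) ρ
      - ergotropy HB (ptraceC ρ) - ergotropy HC (ptraceB ρ)
    = (Matrix.trace
        (((VB * Matrix.diagonal (fun i => (lamB i : ℂ)) * star VB) ⊗ₖ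
            (VC * Matrix.diagonal (fun i => (lamC i : ℂ)) * star VC)
          - VBC * Matrix.diagonal (fun p => (lamBC (σ.symm p) : ℂ)) * star VBC)
         * (HB ⊗ₖ (1 : Matrix (Fin dC) (Fin dC) ℂ)
            + (1 : Matrix (Fin dB) (Fin dB) ℂ) ⊗ₖ HC))).re := by
  have hAB : Antivary lamB eB := my_antivary eB lamB heB hlamB
  have hAC : Antivary lamC eC := my_antivary eC lamC heC hlamC
  have hABC : Antivary (fun p : Fin dB × Fin dC => lamBC (σ.symm p))
      (fun p : Fin dB × Fin dC => eBC (σ.symm p)) := fun i j hij =>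
    my_antivary eBC lamBC heBC hlamBC hij
  have hsB : sInf {x : ℝ | ∃ U ∈ Matrix.unitaryGroup (Fin dB) ℂ,
      x = (Matrix.trace (U * ptraceC ρ * star U * HB)).re} = ∑ i, lamB i * eB i := by
    simp only [hρB, hHB]
    exact my_sInf_orbit eB lamB hAB VB WB hVB hWB
  have hsC : sInf {x : ℝ | ∃ U ∈ Matrix.unitaryGroup (Fin dC) ℂ,
      x = (Matrix.trace (U * ptraceB ρ * star U * HC)).re} = ∑ i, lamC i * eC i := by
    simp only [hρC, hHC]
    exact my_sInf_orbit eC lamC hAC VC WC hVC hWC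
  have hsBC : sInf {x : ℝ | ∃ U ∈ Matrix.unitaryGroup (Fin dB × Fin dC) ℂ,
      x = (Matrix.trace (U * ρ * star U * (HB ⊗ₖ (1 : Matrix (Fin dC) (Fin dC) ℂ)
        + (1 : Matrix (Fin dB) (Fin dB) ℂ) ⊗ₖ HC))).re}
      = ∑ i, lamBC i * eBC i := by
    simp only [hρBC, hHBC]
    rw [my_sInf_orbit (fun p => eBC (σ.symm p)) (fun p => lamBC (σ.symm p)) hABC
      VBC WBC hVBC hWBC]
    exact Equiv.sum_comp σ.symm (fun i => lamBC i * eBC i)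
  have hlamB1 : ∑ i, lamB i = 1 := by
    have h1 : Matrix.trace (ptraceC ρ) = 1 := by rw [my_ptraceC_trace, hρ.2]
    rw [hρB, my_trace_conj_single WB hWB] at h1
    exact_mod_cast h1
  have hlamC1 : ∑ i, lamC i = 1 := by
    have h1 : Matrix.trace (ptraceB ρ) = 1 := by rw [my_ptraceB_trace, hρ.2]
    rw [hρC, my_trace_conj_single WC hWC] at h1
    exact_mod_cast h1
  have e1 : Matrix.trace (((VB * Matrix.diagonal (fun i => (lamB i : ℂ)) * star VB) ⊗ₖ
        (VC * Matrix.diagonal (fun i => (lamC i : ℂ)) * star VC)) *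
        (HB ⊗ₖ (1 : Matrix (Fin dC) (Fin dC) ℂ)))
      = (((∑ i, lamB i * eB i) * (∑ i, lamC i) : ℝ) : ℂ) := by
    rw [hHB, ← Matrix.mul_kronecker_mul, Matrix.trace_kronecker, Matrix.mul_one,
      my_trace_conj VB hVB, my_trace_conj_single VC hVC]
    push_cast
    ring
  have e2 : Matrix.trace (((VB * Matrix.diagonal (fun i => (lamB i : ℂ)) * star VB) ⊗ₖ
        (VC * Matrix.diagonal (fun i => (lamC i : ℂ)) * star VC)) *
        ((1 : Matrix (Fin dB) (Fin dB) ℂ) ⊗ₖ HC))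
      = (((∑ i, lamB i) * (∑ i, lamC i * eC i) : ℝ) : ℂ) := by
    rw [hHC, ← Matrix.mul_kronecker_mul, Matrix.trace_kronecker, Matrix.mul_one,
      my_trace_conj VC hVC, my_trace_conj_single VB hVB]
    push_cast
    ring
  have e3 : Matrix.trace ((VBC * Matrix.diagonal (fun p => (lamBC (σ.symm p) : ℂ)) *
        star VBC) * (HB ⊗ₖ (1 : Matrix (Fin dC) (Fin dC) ℂ)
        + (1 : Matrix (Fin dB) (Fin dB) ℂ) ⊗ₖ HC))
      = ((∑ i, lamBC i * eBC i : ℝ) : ℂ) := by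
    rw [hHBC, my_trace_conj VBC hVBC]
    push_cast
    exact Equiv.sum_comp σ.symm (fun i => ((lamBC i : ℂ) * (eBC i : ℂ)))
  have hRHS : (Matrix.trace
        (((VB * Matrix.diagonal (fun i => (lamB i : ℂ)) * star VB) ⊗ₖ
            (VC * Matrix.diagonal (fun i => (lamC i : ℂ)) * star VC)
          - VBC * Matrix.diagonal (fun p => (lamBC (σ.symm p) : ℂ)) * star VBC)
         * (HB ⊗ₖ (1 : Matrix (Fin dC) (Fin dC) ℂ)
            + (1 : Matrix (Fin dB) (Fin dB) ℂ) ⊗ₖ HC))).re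
      = (∑ i, lamB i * eB i) + (∑ i, lamC i * eC i) - ∑ i, lamBC i * eBC i := by
    rw [Matrix.sub_mul, Matrix.trace_sub, Matrix.mul_add, Matrix.trace_add, e1, e2, e3,
      hlamB1, hlamC1, mul_one, one_mul, ← Complex.ofReal_add, ← Complex.ofReal_sub,
      Complex.ofReal_re]
  have hT : Matrix.trace (ρ * (HB ⊗ₖ (1 : Matrix (Fin dC) (Fin dC) ℂ)
        + (1 : Matrix (Fin dB) (Fin dB) ℂ) ⊗ₖ HC))
      = Matrix.trace (ptraceC ρ * HB) + Matrix.trace (ptraceB ρ * HC) :=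
    my_trace_split ρ HB HC
  simp only [ergotropy]
  rw [hsB, hsC, hsBC, hRHS, hT, Complex.add_re]
  ring
end

section
/- Under an energy-conserving unitary, the ergotropy gain equals the decrease of the ergotropic gap: if [U_{BC}, H_{BC}] = 0 and ρ̃_{BC} = U_{BC} ρ_{BC} U_{BC}†, then E(ρ̃_B) + E(ρ̃_C) − E(ρ_B) − E(ρ_C) = δ(ρ_{BC}) − δ(ρ̃_{BC}), where δ(σ) = E(σ) − E(σ_B) − E(σ_C) is the ergotropic gap. -/
open Matrix Kronecker
open scoped ComplexOrder

lemma ergotropy_conj {n : Type*} [Fintype n] [DecidableEq n]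
    (H ρ U : Matrix n n ℂ) (hU : U ∈ Matrix.unitaryGroup n ℂ)
    (hcomm : U * H = H * U) :
    ergotropy H (U * ρ * star U) = ergotropy H ρ := by
  have hUU : star U * U = 1 := hU.1
  have hfix : star U * H * U = H := by
    calc star U * H * U = star U * (U * H) := by rw [mul_assoc, ← hcomm]
    _ = H := by rw [← mul_assoc, hUU, one_mul]
  have h2 : star U * H = H * star U := by
    calc star U * H = star U * H * (U * star U) := by rw [hU.2, mul_one]
    _ = H * star U := by rw [← mul_assoc, hfix]
  unfold ergotropy
  have htr : Matrix.trace (U * ρ * star U * H) = Matrix.trace (ρ * H) := by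
    calc Matrix.trace (U * ρ * star U * H)
        = Matrix.trace (U * (ρ * H) * star U) := by
          rw [mul_assoc (U * ρ), h2, ← mul_assoc, mul_assoc U ρ H]
    _ = Matrix.trace (star U * (U * (ρ * H))) := Matrix.trace_mul_comm _ _
    _ = Matrix.trace (ρ * H) := by rw [← mul_assoc, hUU, one_mul]
  rw [htr]
  congr 2
  ext x
  constructor
  · rintro ⟨V, hV, rfl⟩
    have he : V * (U * ρ * star U) * star V = (V * U) * ρ * star (V * U) := by
      simp [Matrix.star_mul, Matrix.mul_assoc]
    exact ⟨V * U, mul_mem hV hU, by rw [he]⟩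
  · rintro ⟨W, hW, rfl⟩
    have he : W * star U * (U * ρ * star U) * star (W * star U) = W * ρ * star W := by
      rw [Matrix.star_mul, star_star]
      simp only [Matrix.mul_assoc]
      rw [← Matrix.mul_assoc (star U) U, hUU, one_mul,
          ← Matrix.mul_assoc (star U) U, hUU, one_mul]
    exact ⟨W * star U, mul_mem hW (Unitary.star_mem hU), by rw [he]⟩

/-- Under an energy-conserving unitary, the ergotropy gain equals the
decrease of the ergotropic gap `δ(σ) = E(σ) − E(σ_B) − E(σ_C)`. -/
theorem gain_eq_gap_decrease {dB dC : ℕ}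
    (HB : Matrix (Fin dB) (Fin dB) ℂ) (HC : Matrix (Fin dC) (Fin dC) ℂ)
    (hHB : HB.IsHermitian) (hHC : HC.IsHermitian)
    (ρ : Matrix (Fin dB × Fin dC) (Fin dB × Fin dC) ℂ) (hρ : IsDensityMatrix ρ)
    (U : Matrix (Fin dB × Fin dC) (Fin dB × Fin dC) ℂ)
    (hU : U ∈ Matrix.unitaryGroup (Fin dB × Fin dC) ℂ)
    (hcomm : U * (HB ⊗ₖ (1 : Matrix (Fin dC) (Fin dC) ℂ)
        + (1 : Matrix (Fin dB) (Fin dB) ℂ) ⊗ₖ HC)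
      = (HB ⊗ₖ (1 : Matrix (Fin dC) (Fin dC) ℂ)
        + (1 : Matrix (Fin dB) (Fin dB) ℂ) ⊗ₖ HC) * U) :
    ergotropy HB (ptraceC (U * ρ * star U)) + ergotropy HC (ptraceB (U * ρ * star U))
      - ergotropy HB (ptraceC ρ) - ergotropy HC (ptraceB ρ)
    = (ergotropy (HB ⊗ₖ (1 : Matrix (Fin dC) (Fin dC) ℂ)
          + (1 : Matrix (Fin dB) (Fin dB) ℂ) ⊗ₖ HC) ρ
        - ergotropy HB (ptraceC ρ) - ergotropy HC (ptraceB ρ))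
      - (ergotropy (HB ⊗ₖ (1 : Matrix (Fin dC) (Fin dC) ℂ)
          + (1 : Matrix (Fin dB) (Fin dB) ℂ) ⊗ₖ HC) (U * ρ * star U)
        - ergotropy HB (ptraceC (U * ρ * star U))
        - ergotropy HC (ptraceB (U * ρ * star U))) := by
  have key := ergotropy_conj _ ρ U hU hcomm
  rw [key]
  ring
end

section
/- Activation in 2×3 dimensions: with H_B = E|1⟩⟨1| on a qubit and H_C = E|1⟩⟨1| + E|2⟩⟨2| on a qutrit, the product state ρ_B ⊗ ρ_C with ρ_B = 1/2 (maximally mixed) and ρ_C = (|0⟩⟨0| + |1⟩⟨1|)/2 is not passive with respect to H_{BC} = H_B ⊗ 1 + 1 ⊗ H_C, even though ρ_B and ρ_C are each passive with respect to their local Hamiltonians. -/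
open Matrix
open scoped ComplexOrder

open Kronecker

section helpers

lemma perm_star {n : Type*} [Fintype n] [DecidableEq n] (σ : Equiv.Perm n) :
    star (σ.toPEquiv.toMatrix : Matrix n n ℂ) = σ.symm.toPEquiv.toMatrix := by
  ext i j
  simp [conjTranspose_apply, PEquiv.toMatrix_apply,
    Equiv.toPEquiv_apply, apply_ite (star : ℂ → ℂ), Equiv.eq_symm_apply, eq_comm]

lemma perm_mem {n : Type*} [Fintype n] [DecidableEq n] (σ : Equiv.Perm n) :
    (σ.toPEquiv.toMatrix : Matrix n n ℂ) ∈ Matrix.unitaryGroup n ℂ := by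
  rw [Matrix.mem_unitaryGroup_iff, perm_star, PEquiv.toMatrix_toPEquiv_mul]
  ext i j
  simp [PEquiv.toMatrix_apply, Equiv.toPEquiv_apply, one_apply, Equiv.eq_symm_apply, eq_comm]

lemma perm_conj {n : Type*} [Fintype n] [DecidableEq n] (σ : Equiv.Perm n) (d : n → ℂ) :
    (σ.toPEquiv.toMatrix : Matrix n n ℂ) * Matrix.diagonal d
        * star (σ.toPEquiv.toMatrix : Matrix n n ℂ) = Matrix.diagonal (d ∘ σ) := by
  rw [perm_star, PEquiv.toMatrix_toPEquiv_mul, PEquiv.mul_toMatrix_toPEquiv]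
  ext i j
  by_cases h : i = j <;> simp [Matrix.diagonal_apply, h, Matrix.submatrix_apply]

lemma trace_diag_mul {n : Type*} [Fintype n] [DecidableEq n] (a b : n → ℂ) :
    Matrix.trace (Matrix.diagonal a * Matrix.diagonal b) = ∑ i, a i * b i := by
  simp [Matrix.diagonal_mul_diagonal, Matrix.trace_diagonal]

lemma trace_formula {n : Type*} [Fintype n] [DecidableEq n] (U : Matrix n n ℂ) (p h : n → ℝ) :
    (Matrix.trace (U * Matrix.diagonal (fun j => (p j : ℂ)) * star U
        * Matrix.diagonal (fun i => (h i : ℂ)))).re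
      = ∑ i, ∑ j, h i * p j * Complex.normSq (U i j) := by
  have key : ∀ i j, U i j * (p j : ℂ) * (star U) j i
      = ((p j * Complex.normSq (U i j) : ℝ) : ℂ) := by
    intro i j
    rw [Matrix.star_apply, Complex.star_def]
    push_cast
    rw [mul_comm (U i j) _, mul_assoc, Complex.mul_conj]
  have expand : Matrix.trace (U * Matrix.diagonal (fun j => (p j : ℂ)) * star U
        * Matrix.diagonal (fun i => (h i : ℂ)))
      = ∑ i, ∑ j, ((h i * (p j * Complex.normSq (U i j)) : ℝ) : ℂ) := by
    rw [Matrix.trace]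
    congr 1
    ext i
    rw [Matrix.diag_apply, Matrix.mul_diagonal, Matrix.mul_apply, Finset.sum_mul]
    congr 1
    ext j
    rw [Matrix.mul_diagonal, key]
    push_cast
    ring
  rw [expand, Complex.re_sum]
  congr 1; ext i
  rw [Complex.re_sum]
  congr 1; ext j
  rw [Complex.ofReal_re]
  ring

lemma row_sum {n : Type*} [Fintype n] [DecidableEq n] {U : Matrix n n ℂ}
    (hU : U ∈ Matrix.unitaryGroup n ℂ) (i : n) :
    ∑ j, Complex.normSq (U i j) = 1 := by
  have h1 : (U * star U) i i = 1 := by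
    rw [Matrix.mem_unitaryGroup_iff.mp hU, Matrix.one_apply_eq]
  rw [Matrix.mul_apply] at h1
  have : ∑ j, ((Complex.normSq (U i j) : ℝ) : ℂ) = 1 := by
    rw [← h1]; congr 1; ext j
    rw [Matrix.star_apply, Complex.star_def, Complex.mul_conj]
  exact_mod_cast this

lemma col_sum {n : Type*} [Fintype n] [DecidableEq n] {U : Matrix n n ℂ}
    (hU : U ∈ Matrix.unitaryGroup n ℂ) (j : n) :
    ∑ i, Complex.normSq (U i j) = 1 := by
  have h1 : (star U * U) j j = 1 := by
    rw [Matrix.mem_unitaryGroup_iff'.mp hU, Matrix.one_apply_eq]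
  rw [Matrix.mul_apply] at h1
  have : ∑ i, ((Complex.normSq (U i j) : ℝ) : ℂ) = 1 := by
    rw [← h1]; congr 1; ext i
    rw [Matrix.star_apply, Complex.star_def, mul_comm, Complex.mul_conj]
  exact_mod_cast this

end helpers

/-- Activation in 2×3 dimensions: with `H_B = E|1⟩⟨1|` and
`H_C = E|1⟩⟨1| + E|2⟩⟨2|`, the product of the locally passive states
`ρ_B = 1/2` and `ρ_C = (|0⟩⟨0| + |1⟩⟨1|)/2` is not passive for
`H_BC = H_B ⊗ 1 + 1 ⊗ H_C`. -/
theorem activation_two_by_three (E : ℝ) (hE : 0 < E) :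
    ergotropy (Matrix.diagonal ![(0 : ℂ), (E : ℂ)])
        ((1 / 2 : ℂ) • (1 : Matrix (Fin 2) (Fin 2) ℂ)) = 0
    ∧ ergotropy (Matrix.diagonal ![(0 : ℂ), (E : ℂ), (E : ℂ)])
        (Matrix.diagonal ![(1 / 2 : ℂ), (1 / 2 : ℂ), 0]) = 0
    ∧ 0 < ergotropy
        (Matrix.diagonal ![(0 : ℂ), (E : ℂ)] ⊗ₖ (1 : Matrix (Fin 3) (Fin 3) ℂ)
          + (1 : Matrix (Fin 2) (Fin 2) ℂ) ⊗ₖ Matrix.diagonal ![(0 : ℂ), (E : ℂ), (E : ℂ)])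
        (((1 / 2 : ℂ) • (1 : Matrix (Fin 2) (Fin 2) ℂ)) ⊗ₖ
          Matrix.diagonal ![(1 / 2 : ℂ), (1 / 2 : ℂ), 0]) := by
  refine ⟨?_, ?_, ?_⟩
  · -- Part 1
    set H₁ := Matrix.diagonal ![(0 : ℂ), (E : ℂ)]
    set ρ₁ := (1 / 2 : ℂ) • (1 : Matrix (Fin 2) (Fin 2) ℂ)
    have hconj : ∀ U ∈ Matrix.unitaryGroup (Fin 2) ℂ, U * ρ₁ * star U = ρ₁ := by
      intro U hU
      show U * ((1 / 2 : ℂ) • 1) * star U = _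
      rw [mul_smul_comm, mul_one, smul_mul_assoc, Matrix.mem_unitaryGroup_iff.mp hU]
    have hset : {x : ℝ | ∃ U ∈ Matrix.unitaryGroup (Fin 2) ℂ,
        x = (Matrix.trace (U * ρ₁ * star U * H₁)).re}
        = {(Matrix.trace (ρ₁ * H₁)).re} := by
      ext x
      simp only [Set.mem_setOf_eq, Set.mem_singleton_iff]
      constructor
      · rintro ⟨U, hU, rfl⟩; rw [hconj U hU]
      · rintro rfl; exact ⟨1, one_mem _, by simp⟩
    rw [ergotropy, hset, csInf_singleton, sub_self]
  · -- Part 2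
    have hH : Matrix.diagonal ![(0 : ℂ), (E : ℂ), (E : ℂ)]
        = Matrix.diagonal (fun i => ((![(0 : ℝ), E, E] i : ℝ) : ℂ)) := by
      apply congrArg Matrix.diagonal; funext i; fin_cases i <;> simp
    have hρ : Matrix.diagonal ![(1 / 2 : ℂ), (1 / 2 : ℂ), 0]
        = Matrix.diagonal (fun i => ((![(1 / 2 : ℝ), 1 / 2, 0] i : ℝ) : ℂ)) := by
      apply congrArg Matrix.diagonal; funext i; fin_cases i <;> simp
    rw [hH, hρ, ergotropy]
    have hT : (Matrix.trace (Matrix.diagonal (fun i => ((![(1 / 2 : ℝ), 1 / 2, 0] i : ℝ) : ℂ))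
        * Matrix.diagonal (fun i => ((![(0 : ℝ), E, E] i : ℝ) : ℂ)))).re = E / 2 := by
      rw [trace_diag_mul]
      simp [Fin.sum_univ_three]
      ring
    rw [hT]
    have hmem : (E / 2 : ℝ) ∈ {x : ℝ | ∃ U ∈ Matrix.unitaryGroup (Fin 3) ℂ,
        x = (Matrix.trace (U * Matrix.diagonal (fun i => ((![(1 / 2 : ℝ), 1 / 2, 0] i : ℝ) : ℂ))
          * star U * Matrix.diagonal (fun i => ((![(0 : ℝ), E, E] i : ℝ) : ℂ)))).re} := by
      refine ⟨1, one_mem _, ?_⟩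
      simp only [Matrix.one_mul, star_one, Matrix.mul_one]
      rw [hT]
    have hlb : ∀ x ∈ {x : ℝ | ∃ U ∈ Matrix.unitaryGroup (Fin 3) ℂ,
        x = (Matrix.trace (U * Matrix.diagonal (fun i => ((![(1 / 2 : ℝ), 1 / 2, 0] i : ℝ) : ℂ))
          * star U * Matrix.diagonal (fun i => ((![(0 : ℝ), E, E] i : ℝ) : ℂ)))).re},
        E / 2 ≤ x := by
      rintro x ⟨U, hU, rfl⟩
      rw [trace_formula]
      have r0 := row_sum hU 0
      have c0 := col_sum hU 0
      have c1 := col_sum hU 1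
      simp only [Fin.sum_univ_three] at r0 c0 c1 ⊢
      have n02 := Complex.normSq_nonneg (U 0 2)
      simp only [Matrix.cons_val_zero, Matrix.cons_val_one, Matrix.head_cons,
        Matrix.cons_val_two, Matrix.tail_cons]
      nlinarith [Complex.normSq_nonneg (U 0 0), Complex.normSq_nonneg (U 0 1)]
    have : sInf {x : ℝ | ∃ U ∈ Matrix.unitaryGroup (Fin 3) ℂ,
        x = (Matrix.trace (U * Matrix.diagonal (fun i => ((![(1 / 2 : ℝ), 1 / 2, 0] i : ℝ) : ℂ))
          * star U * Matrix.diagonal (fun i => ((![(0 : ℝ), E, E] i : ℝ) : ℂ)))).re} = E / 2 :=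
      le_antisymm (csInf_le ⟨E / 2, hlb⟩ hmem) (le_csInf ⟨E / 2, hmem⟩ hlb)
    rw [this, sub_self]
  · -- Part 3
    set h3 : Fin 2 × Fin 3 → ℝ := fun i => ![(0 : ℝ), E] i.1 + ![(0 : ℝ), E, E] i.2 with h3_def
    set p3 : Fin 2 × Fin 3 → ℝ := fun i => ![(1 / 2 : ℝ), 1 / 2, 0] i.2 / 2 with p3_def
    have hH3 : Matrix.diagonal ![(0 : ℂ), (E : ℂ)] ⊗ₖ (1 : Matrix (Fin 3) (Fin 3) ℂ)
          + (1 : Matrix (Fin 2) (Fin 2) ℂ) ⊗ₖ Matrix.diagonal ![(0 : ℂ), (E : ℂ), (E : ℂ)]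
        = Matrix.diagonal (fun i => ((h3 i : ℝ) : ℂ)) := by
      rw [show (1 : Matrix (Fin 3) (Fin 3) ℂ) = Matrix.diagonal (fun _ => 1) from
          Matrix.diagonal_one.symm,
        show (1 : Matrix (Fin 2) (Fin 2) ℂ) = Matrix.diagonal (fun _ => 1) from
          Matrix.diagonal_one.symm,
        Matrix.diagonal_kronecker_diagonal, Matrix.diagonal_kronecker_diagonal,
        Matrix.diagonal_add]
      apply congrArg Matrix.diagonal
      funext i
      obtain ⟨b, c⟩ := i
      fin_cases b <;> fin_cases c <;> simp [h3_def] <;> push_cast <;> ring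
    have hρ3 : ((1 / 2 : ℂ) • (1 : Matrix (Fin 2) (Fin 2) ℂ)) ⊗ₖ
          Matrix.diagonal ![(1 / 2 : ℂ), (1 / 2 : ℂ), 0]
        = Matrix.diagonal (fun i => ((p3 i : ℝ) : ℂ)) := by
      rw [Matrix.smul_kronecker,
        show (1 : Matrix (Fin 2) (Fin 2) ℂ) = Matrix.diagonal (fun _ => 1) from
          Matrix.diagonal_one.symm,
        Matrix.diagonal_kronecker_diagonal, ← Matrix.diagonal_smul]
      apply congrArg Matrix.diagonal
      funext i
      obtain ⟨b, c⟩ := i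
      fin_cases b <;> fin_cases c <;> simp [p3_def] <;> push_cast <;> ring
    rw [hH3, hρ3, ergotropy]
    have hT : (Matrix.trace (Matrix.diagonal (fun i => ((p3 i : ℝ) : ℂ))
        * Matrix.diagonal (fun i => ((h3 i : ℝ) : ℂ)))).re = E := by
      rw [trace_diag_mul]
      simp [Fintype.sum_prod_type, Fin.sum_univ_two, Fin.sum_univ_three, h3_def, p3_def]
      push_cast
      ring
    rw [hT]
    set S := {x : ℝ | ∃ U ∈ Matrix.unitaryGroup (Fin 2 × Fin 3) ℂ,
        x = (Matrix.trace (U * Matrix.diagonal (fun i => ((p3 i : ℝ) : ℂ))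
          * star U * Matrix.diagonal (fun i => ((h3 i : ℝ) : ℂ)))).re} with S_def
    have hmem : (3 / 4 * E : ℝ) ∈ S := by
      refine ⟨(Equiv.swap ((1 : Fin 2), (1 : Fin 3)) ((0 : Fin 2), (2 : Fin 3))).toPEquiv.toMatrix,
        perm_mem _, ?_⟩
      rw [perm_conj, trace_diag_mul]
      rw [Fintype.sum_prod_type]
      simp only [Fin.sum_univ_two, Fin.sum_univ_three, Function.comp_apply]
      rw [show ∀ z : ℂ, z.re = z.re from fun _ => rfl]
      simp [Equiv.swap_apply_def, h3_def, p3_def, Prod.ext_iff]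
      push_cast
      ring
    have h3nn : ∀ i, 0 ≤ h3 i := by
      rintro ⟨b, c⟩
      fin_cases b <;> fin_cases c <;> simp [h3_def] <;> positivity
    have p3nn : ∀ i, 0 ≤ p3 i := by
      rintro ⟨b, c⟩
      fin_cases b <;> fin_cases c <;> simp [p3_def] <;> norm_num
    have hbdd : ∀ x ∈ S, (0 : ℝ) ≤ x := by
      rintro x ⟨U, hU, rfl⟩
      rw [trace_formula]
      refine Finset.sum_nonneg fun i _ => Finset.sum_nonneg fun j _ => ?_
      exact mul_nonneg (mul_nonneg (h3nn i) (p3nn j)) (Complex.normSq_nonneg _)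
    have h1 : sInf S ≤ 3 / 4 * E := csInf_le ⟨0, hbdd⟩ hmem
    linarith
end

section
/- There exists an entangled two-qubit state with zero ergotropic gap: for H_B = H_C = E|1⟩⟨1|, the state ρ_{BC} = (1/2)|00⟩⟨00| + (1/2)|Ψ⁺⟩⟨Ψ⁺| with |Ψ⁺⟩ = (|01⟩ + |10⟩)/√2 is entangled (its partial transpose is not positive semidefinite) yet satisfies E(ρ_{BC}) = E(ρ_B) + E(ρ_C). -/
open Matrix Kronecker
open scoped ComplexOrder

/-- Outer product `|v⟩⟨v|`. -/
noncomputable def outer {n : Type*} (v : n → ℂ) : Matrix n n ℂ :=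
  Matrix.of fun i j => v i * star (v j)

/-- Partial transpose on the first (B) factor. -/
noncomputable def ptransposeB {dB dC : Type*}
    (ρ : Matrix (dB × dC) (dB × dC) ℂ) : Matrix (dB × dC) (dB × dC) ℂ :=
  Matrix.of fun p q => ρ (q.1, p.2) (p.1, q.2)

/- ### Auxiliary lemmas -/

lemma outer_posSemidef {n : Type*} [Fintype n] (v : n → ℂ) : (outer v).PosSemidef := by
  refine Matrix.PosSemidef.of_dotProduct_mulVec_nonneg ?_ ?_
  · ext i j
    simp [outer, Matrix.conjTranspose_apply, mul_comm]
  · intro x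
    have h : star x ⬝ᵥ (outer v) *ᵥ x = star (star v ⬝ᵥ x) * (star v ⬝ᵥ x) := by
      simp only [Matrix.mulVec, dotProduct, outer, Matrix.of_apply, Pi.star_apply,
        star_sum, star_mul', star_star, Finset.sum_mul, Finset.mul_sum]
      rw [Finset.sum_comm]
      refine Finset.sum_congr rfl fun i _ => Finset.sum_congr rfl fun j _ => by ring
    rw [h]
    exact star_mul_self_nonneg _

lemma smul_posSemidef {n : Type*} [Fintype n] {r : ℝ} (hr : 0 ≤ r)
    {M : Matrix n n ℂ} (hM : M.PosSemidef) : ((r : ℂ) • M).PosSemidef := by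
  refine Matrix.PosSemidef.of_dotProduct_mulVec_nonneg ?_ ?_
  · have := hM.1
    unfold Matrix.IsHermitian at *
    rw [conjTranspose_smul, this]
    simp [Complex.star_def, Complex.conj_ofReal]
  · intro x
    have h := hM.dotProduct_mulVec_nonneg x
    have he : star x ⬝ᵥ ((r : ℂ) • M) *ᵥ x = (r : ℂ) * (star x ⬝ᵥ M *ᵥ x) := by
      rw [Matrix.smul_mulVec, dotProduct_smul, smul_eq_mul]
    rw [he]
    rw [Complex.le_def] at h ⊢
    constructor
    · simp only [Complex.zero_re, Complex.mul_re, Complex.ofReal_re, Complex.ofReal_im,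
        zero_mul, sub_zero, ← h.2] at *
      simpa using mul_nonneg hr h.1
    · simp [Complex.mul_im, ← h.2]

lemma psd_diag {n : Type*} [Fintype n] [DecidableEq n] {M : Matrix n n ℂ}
    (hM : M.PosSemidef) (i : n) : 0 ≤ (M i i).re ∧ (M i i).im = 0 := by
  have h := hM.dotProduct_mulVec_nonneg (Pi.single i 1)
  have he : star (Pi.single i (1:ℂ)) ⬝ᵥ M *ᵥ (Pi.single i 1) = M i i := by
    simp [Matrix.mulVec, dotProduct, Pi.single_apply, apply_ite, Finset.sum_ite_eq',
      Finset.sum_ite_eq]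
  rw [he] at h
  rw [Complex.le_def] at h
  exact ⟨h.1, h.2.symm⟩

lemma ergotropy_eq_zero {n : Type*} [Fintype n] [DecidableEq n] {H ρ : Matrix n n ℂ}
    (h : ∀ U ∈ Matrix.unitaryGroup n ℂ,
      (Matrix.trace (ρ * H)).re ≤ (Matrix.trace (U * ρ * star U * H)).re) :
    ergotropy H ρ = 0 := by
  have hmem : (Matrix.trace (ρ * H)).re ∈ {x : ℝ | ∃ U ∈ Matrix.unitaryGroup n ℂ,
      x = (Matrix.trace (U * ρ * star U * H)).re} := by
    refine ⟨1, one_mem _, ?_⟩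
    simp
  have hl : IsLeast {x : ℝ | ∃ U ∈ Matrix.unitaryGroup n ℂ,
      x = (Matrix.trace (U * ρ * star U * H)).re} (Matrix.trace (ρ * H)).re :=
    ⟨hmem, by rintro x ⟨U, hU, rfl⟩; exact h U hU⟩
  unfold ergotropy
  rw [hl.csInf_eq]
  ring

lemma conj_sub_smul {n : Type*} [Fintype n] [DecidableEq n] {U : Matrix n n ℂ}
    (hU : U ∈ Matrix.unitaryGroup n ℂ) (a : ℂ) (ρ : Matrix n n ℂ) :
    U * (a • 1 - ρ) * star U = a • 1 - U * ρ * star U := by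
  have h1 : U * star U = 1 := Matrix.mem_unitaryGroup_iff.mp hU
  rw [Matrix.mul_sub, Matrix.sub_mul, Matrix.mul_smul, mul_one, Matrix.smul_mul, h1]

lemma conj_sub_smul' {n : Type*} [Fintype n] [DecidableEq n] {U : Matrix n n ℂ}
    (hU : U ∈ Matrix.unitaryGroup n ℂ) (a : ℂ) (ρ : Matrix n n ℂ) :
    U * (ρ - a • 1) * star U = U * ρ * star U - a • 1 := by
  have h1 : U * star U = 1 := Matrix.mem_unitaryGroup_iff.mp hU
  rw [Matrix.mul_sub, Matrix.sub_mul, Matrix.mul_smul, mul_one, Matrix.smul_mul, h1]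

lemma conj_trace {n : Type*} [Fintype n] [DecidableEq n] {U : Matrix n n ℂ}
    (hU : U ∈ Matrix.unitaryGroup n ℂ) (ρ : Matrix n n ℂ) :
    (U * ρ * star U).trace = ρ.trace := by
  rw [Matrix.trace_mul_cycle, Matrix.mem_unitaryGroup_iff'.mp hU, one_mul]

lemma conj_posSemidef {n : Type*} [Fintype n] [DecidableEq n] {U : Matrix n n ℂ}
    (hU : U ∈ Matrix.unitaryGroup n ℂ) {ρ : Matrix n n ℂ} (hρ : ρ.PosSemidef) :
    (U * ρ * star U).PosSemidef := by
  rw [Matrix.star_eq_conjTranspose]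
  exact hρ.mul_mul_conjTranspose_same U

lemma trace_mul_diag {n : Type*} [Fintype n] [DecidableEq n] (σ : Matrix n n ℂ) (d : n → ℂ) :
    (σ * Matrix.diagonal d).trace = ∑ p, σ p p * d p := by
  simp [Matrix.trace, Matrix.diag, Matrix.mul_apply, Matrix.diagonal_apply, Finset.sum_ite_eq']

set_option maxHeartbeats 4000000 in
/-- The two-qubit state
`ρ_BC = (1/2)|00⟩⟨00| + (1/2)|Ψ⁺⟩⟨Ψ⁺|` (equal gaps `E`) is entangled — its partial
transpose is not positive semidefinite — yet has zero ergotropic gap. -/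
theorem entangled_state_with_zero_gap (E : ℝ) (hE : 0 < E) :
    ¬ (ptransposeB
        ((1 / 2 : ℂ) • outer (fun p : Fin 2 × Fin 2 => if p = (0, 0) then 1 else 0)
          + (1 / 2 : ℂ) • outer (fun p : Fin 2 × Fin 2 =>
              if p = (0, 1) ∨ p = (1, 0) then (1 / Real.sqrt 2 : ℝ) else 0))).PosSemidef
    ∧ ergotropy
        (Matrix.diagonal ![(0 : ℂ), (E : ℂ)] ⊗ₖ (1 : Matrix (Fin 2) (Fin 2) ℂ)
          + (1 : Matrix (Fin 2) (Fin 2) ℂ) ⊗ₖ Matrix.diagonal ![(0 : ℂ), (E : ℂ)])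
        ((1 / 2 : ℂ) • outer (fun p : Fin 2 × Fin 2 => if p = (0, 0) then 1 else 0)
          + (1 / 2 : ℂ) • outer (fun p : Fin 2 × Fin 2 =>
              if p = (0, 1) ∨ p = (1, 0) then (1 / Real.sqrt 2 : ℝ) else 0))
      = ergotropy (Matrix.diagonal ![(0 : ℂ), (E : ℂ)])
          (ptraceC
            ((1 / 2 : ℂ) • outer (fun p : Fin 2 × Fin 2 => if p = (0, 0) then 1 else 0)
              + (1 / 2 : ℂ) • outer (fun p : Fin 2 × Fin 2 =>
                  if p = (0, 1) ∨ p = (1, 0) then (1 / Real.sqrt 2 : ℝ) else 0)))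
        + ergotropy (Matrix.diagonal ![(0 : ℂ), (E : ℂ)])
          (ptraceB
            ((1 / 2 : ℂ) • outer (fun p : Fin 2 × Fin 2 => if p = (0, 0) then 1 else 0)
              + (1 / 2 : ℂ) • outer (fun p : Fin 2 × Fin 2 =>
                  if p = (0, 1) ∨ p = (1, 0) then (1 / Real.sqrt 2 : ℝ) else 0))) := by
  have hs : (Real.sqrt 2) * (Real.sqrt 2) = 2 := Real.mul_self_sqrt (by norm_num)
  have h2 : Real.sqrt 2 ≠ 0 := by positivity
  set ρ : Matrix (Fin 2 × Fin 2) (Fin 2 × Fin 2) ℂ :=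
    (1 / 2 : ℂ) • outer (fun p : Fin 2 × Fin 2 => if p = (0, 0) then 1 else 0)
      + (1 / 2 : ℂ) • outer (fun p : Fin 2 × Fin 2 =>
          if p = (0, 1) ∨ p = (1, 0) then (1 / Real.sqrt 2 : ℝ) else 0) with hρdef
  -- basic facts about ρ
  have hhalf : ((1 / 2 : ℂ) = ((1/2 : ℝ) : ℂ)) := by norm_num
  have hρpsd : ρ.PosSemidef := by
    rw [hρdef, hhalf]
    exact (smul_posSemidef (by norm_num) (outer_posSemidef _)).add
      (smul_posSemidef (by norm_num) (outer_posSemidef _))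
  have hρtr : ρ.trace = 1 := by
    rw [hρdef]
    simp only [Matrix.trace, Matrix.diag, Fintype.sum_prod_type, Fin.sum_univ_two, outer,
      Matrix.add_apply, Matrix.smul_apply, Matrix.of_apply]
    norm_num [Prod.ext_iff, Complex.ext_iff]
    field_simp
    nlinarith [hs]
  have hρbound : ((1/2 : ℂ) • 1 - ρ).PosSemidef := by
    have hdecomp : ((1/2 : ℂ) • 1 - ρ) =
        (1/2 : ℂ) • outer (fun p : Fin 2 × Fin 2 =>
            if p = (0,1) then (1 / Real.sqrt 2 : ℝ)
            else if p = (1,0) then (-(1 / Real.sqrt 2) : ℝ) else 0)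
        + (1/2 : ℂ) • outer (fun p : Fin 2 × Fin 2 => if p = (1,1) then 1 else 0) := by
      rw [hρdef]
      ext p q
      fin_cases p <;> fin_cases q <;>
        simp only [outer, Matrix.of_apply, Matrix.add_apply, Matrix.sub_apply,
          Matrix.smul_apply, Matrix.one_apply] <;>
        norm_num [Prod.ext_iff, Complex.ext_iff] <;>
        field_simp <;> nlinarith [hs, Real.sqrt_nonneg 2]
    rw [hdecomp, hhalf]
    exact (smul_posSemidef (by norm_num) (outer_posSemidef _)).add
      (smul_posSemidef (by norm_num) (outer_posSemidef _))
  -- marginals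
  have hB : ptraceC ρ = !![(3/4 : ℂ), 0; 0, 1/4] := by
    rw [hρdef]
    ext i j
    fin_cases i <;> fin_cases j <;>
      simp only [ptraceC, Matrix.of_apply, Fin.sum_univ_two, outer, Matrix.add_apply,
        Matrix.smul_apply, Matrix.cons_val', Matrix.cons_val_zero, Matrix.cons_val_one,
        Matrix.head_cons, Matrix.head_fin_const, Matrix.empty_val'] <;>
      norm_num [Prod.ext_iff, Complex.ext_iff] <;>
      field_simp <;> nlinarith [hs, Real.sqrt_nonneg 2]
  have hC : ptraceB ρ = !![(3/4 : ℂ), 0; 0, 1/4] := by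
    rw [hρdef]
    ext i j
    fin_cases i <;> fin_cases j <;>
      simp only [ptraceB, Matrix.of_apply, Fin.sum_univ_two, outer, Matrix.add_apply,
        Matrix.smul_apply, Matrix.cons_val', Matrix.cons_val_zero, Matrix.cons_val_one,
        Matrix.head_cons, Matrix.head_fin_const, Matrix.empty_val'] <;>
      norm_num [Prod.ext_iff, Complex.ext_iff] <;>
      field_simp <;> nlinarith [hs, Real.sqrt_nonneg 2]
  have hmbound : ((!![(3/4 : ℂ), 0; 0, 1/4] : Matrix (Fin 2) (Fin 2) ℂ)
      - (1/4 : ℂ) • 1).PosSemidef := by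
    have hdecomp : ((!![(3/4 : ℂ), 0; 0, 1/4] : Matrix (Fin 2) (Fin 2) ℂ) - (1/4 : ℂ) • 1) =
        (1/2 : ℂ) • outer (fun i : Fin 2 => if i = 0 then 1 else 0) := by
      ext i j
      fin_cases i <;> fin_cases j <;> simp [outer, Matrix.one_apply] <;> norm_num
    rw [hdecomp, hhalf]
    exact smul_posSemidef (by norm_num) (outer_posSemidef _)
  -- Hamiltonian in diagonal form
  have hH : (Matrix.diagonal ![(0 : ℂ), (E : ℂ)] ⊗ₖ (1 : Matrix (Fin 2) (Fin 2) ℂ)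
        + (1 : Matrix (Fin 2) (Fin 2) ℂ) ⊗ₖ Matrix.diagonal ![(0 : ℂ), (E : ℂ)])
      = Matrix.diagonal (fun p : Fin 2 × Fin 2 =>
          (if p.1 = 1 then (E:ℂ) else 0) + (if p.2 = 1 then (E:ℂ) else 0)) := by
    ext ⟨a,b⟩ ⟨c,d⟩
    fin_cases a <;> fin_cases b <;> fin_cases c <;> fin_cases d <;>
      simp [Matrix.kroneckerMap_apply, Matrix.diagonal_apply, Matrix.one_apply, Prod.ext_iff]
  -- marginal ergotropy is zero
  have hmarg : ergotropy (Matrix.diagonal ![(0 : ℂ), (E : ℂ)])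
      (!![(3/4 : ℂ), 0; 0, 1/4] : Matrix (Fin 2) (Fin 2) ℂ) = 0 := by
    apply ergotropy_eq_zero
    intro U hU
    have htval : ((!![(3/4 : ℂ), 0; 0, 1/4] * Matrix.diagonal ![(0:ℂ), (E:ℂ)]).trace).re
        = E / 4 := by
      rw [trace_mul_diag]
      norm_num [Fin.sum_univ_two]
      ring
    rw [htval]
    set σ := U * !![(3/4 : ℂ), 0; 0, 1/4] * star U with hσdef
    have hσbound : (σ - (1/4 : ℂ) • 1).PosSemidef := by
      rw [hσdef, ← conj_sub_smul' hU]
      exact conj_posSemidef hU hmbound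
    have hd := psd_diag hσbound 1
    simp only [Matrix.sub_apply, Matrix.smul_apply, Matrix.one_apply_eq, Complex.sub_re,
      Complex.sub_im, smul_eq_mul, mul_one] at hd
    have hd1 : 1/4 ≤ (σ 1 1).re := by
      have := hd.1
      norm_num at this
      linarith
    have hd1im : (σ 1 1).im = 0 := by
      have := hd.2
      norm_num at this
      linarith
    rw [trace_mul_diag]
    simp only [Fin.sum_univ_two, Matrix.cons_val_zero, Matrix.cons_val_one, Matrix.head_cons,
      mul_zero, zero_add, Complex.mul_re, Complex.ofReal_re, Complex.ofReal_im, mul_zero,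
      sub_zero, hd1im]
    nlinarith [hd1, hE]
  -- global ergotropy is zero
  have hglob : ergotropy
      (Matrix.diagonal ![(0 : ℂ), (E : ℂ)] ⊗ₖ (1 : Matrix (Fin 2) (Fin 2) ℂ)
        + (1 : Matrix (Fin 2) (Fin 2) ℂ) ⊗ₖ Matrix.diagonal ![(0 : ℂ), (E : ℂ)]) ρ = 0 := by
    rw [hH]
    apply ergotropy_eq_zero
    intro U hU
    have htval : ((ρ * Matrix.diagonal (fun p : Fin 2 × Fin 2 =>
        (if p.1 = 1 then (E:ℂ) else 0) + (if p.2 = 1 then (E:ℂ) else 0))).trace).re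
        = E / 2 := by
      rw [trace_mul_diag, hρdef]
      simp only [Fintype.sum_prod_type, Fin.sum_univ_two, outer, Matrix.add_apply,
        Matrix.smul_apply, Matrix.of_apply]
      norm_num [Prod.ext_iff, Complex.ext_iff]
      field_simp
      nlinarith [hs]
    rw [htval]
    set σ := U * ρ * star U with hσdef
    have hσpsd : σ.PosSemidef := conj_posSemidef hU hρpsd
    have hσtr : σ.trace = 1 := by rw [hσdef, conj_trace hU, hρtr]
    have hσbound : ((1/2 : ℂ) • 1 - σ).PosSemidef := by
      rw [hσdef, ← conj_sub_smul hU]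
      exact conj_posSemidef hU hρbound
    have h00 := psd_diag hσbound 0
    simp only [Matrix.sub_apply, Matrix.smul_apply, Matrix.one_apply_eq, Complex.sub_re,
      smul_eq_mul, mul_one] at h00
    have h00' : (σ 0 0).re ≤ 1/2 := by
      have := h00.1
      norm_num at this
      linarith
    have h01 := (psd_diag hσpsd (0,1))
    have h10 := (psd_diag hσpsd (1,0))
    have h11 := (psd_diag hσpsd 1)
    have hsum : (σ.trace).re = 1 := by rw [hσtr]; simp
    simp only [Matrix.trace, Matrix.diag, Fintype.sum_prod_type, Fin.sum_univ_two,
      Complex.add_re] at hsum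
    rw [trace_mul_diag]
    simp only [Fintype.sum_prod_type, Fin.sum_univ_two]
    norm_num [Complex.add_re, Complex.mul_re, Complex.ofReal_re, Complex.ofReal_im,
      h01.2, h10.2, h11.2, Prod.mk_one_one, Prod.mk_zero_zero] at hsum ⊢
    nlinarith [h00', h01.1, h10.1, h11.1, hsum, hE]
  refine ⟨?_, ?_⟩
  · -- entanglement: partial transpose not PSD
    intro h
    rw [hρdef] at h
    have hq := h.dotProduct_mulVec_nonneg (fun p => if p = (0,0) then 1 else if p = (1,1) then -2 else 0)
    rw [Complex.le_def] at hq
    have := hq.1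
    simp only [Matrix.mulVec, dotProduct, Fintype.sum_prod_type, Fin.sum_univ_two,
      ptransposeB, outer, Matrix.of_apply, Matrix.add_apply, Matrix.smul_apply,
      Pi.star_apply] at this
    norm_num [Complex.ext_iff, Complex.add_re, Complex.mul_re, Complex.ofReal_re,
      Prod.ext_iff, Prod.fst_one, Prod.snd_one] at this
    nlinarith [this, hs, Real.sqrt_nonneg 2]
  · rw [hglob, hB, hC, hmarg]
    norm_num
end

section
/- QMP inequalities from nonnegativity of the ergotropic gap: let ρ_{BC} be a density matrix on a d_B·d_C-dimensional bipartite Hilbert space with marginals ρ_B, ρ_C. Let λ^B_0 ≥ ... ≥ λ^B_{d_B−1}, λ^C_0 ≥ ... ≥ λ^C_{d_C−1}, λ^{BC}_0 ≥ ... ≥ λ^{BC}_{d_Bd_C−1} denote the decreasingly ordered eigenvalues of ρ_B, ρ_C, ρ_{BC}. Then for any increasing real sequences E^B_0 ≤ ... ≤ E^B_{d_B−1} and E^C_0 ≤ ... ≤ E^C_{d_C−1}, Σ_k E^B_k λ^B_k + Σ_k E^C_k λ^C_k ≥ Σ_k (E^B + E^C)_k λ^{BC}_k, where (E^B + E^C)_k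 is the increasing rearrangement of the multiset {E^B_i + E^C_j}. -/
open Matrix Kronecker
open scoped ComplexOrder

section Aux

lemma aux_trace_mul_kron_one {m p : Type*} [Fintype m] [Fintype p] [DecidableEq p]
    (ρ : Matrix (m × p) (m × p) ℂ) (X : Matrix m m ℂ) :
    Matrix.trace (ρ * (X ⊗ₖ (1 : Matrix p p ℂ))) = Matrix.trace (ptraceC ρ * X) := by
  simp only [Matrix.trace, Matrix.diag, Matrix.mul_apply, ptraceC, Matrix.of_apply,
    kroneckerMap_apply, Matrix.one_apply, Fintype.sum_prod_type, mul_ite, mul_one, mul_zero,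
    Finset.sum_ite_eq, Finset.sum_ite_eq', Finset.mem_univ, if_true, Finset.sum_mul]
  exact Finset.sum_congr rfl fun x _ => Finset.sum_comm

lemma aux_trace_mul_one_kron {m p : Type*} [Fintype m] [Fintype p] [DecidableEq m]
    (ρ : Matrix (m × p) (m × p) ℂ) (Y : Matrix p p ℂ) :
    Matrix.trace (ρ * ((1 : Matrix m m ℂ) ⊗ₖ Y)) = Matrix.trace (ptraceB ρ * Y) := by
  simp only [Matrix.trace, Matrix.diag, Matrix.mul_apply, ptraceB, Matrix.of_apply,
    kroneckerMap_apply, Matrix.one_apply, Fintype.sum_prod_type, mul_ite, ite_mul, one_mul,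
    zero_mul, mul_zero, Finset.sum_ite_eq, Finset.sum_ite_eq', Finset.mem_univ, if_true,
    Finset.sum_mul]
  have h1 : ∀ (x : m) (x1 : p),
      (∑ x2 : m, ∑ x3 : p, if x2 = x then ρ (x, x1) (x2, x3) * Y x3 x1 else 0)
        = ∑ x3 : p, ρ (x, x1) (x, x3) * Y x3 x1 := by
    intro x x1
    rw [Finset.sum_comm]
    simp
  simp only [h1]
  rw [Finset.sum_comm]
  exact Finset.sum_congr rfl fun x1 _ => Finset.sum_comm

lemma aux_kron_star {m p : Type*} [Fintype m] [Fintype p]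
    (A : Matrix m m ℂ) (B : Matrix p p ℂ) :
    star (A ⊗ₖ B) = star A ⊗ₖ star B := by
  ext ⟨i, k⟩ ⟨j, l⟩
  simp [Matrix.star_eq_conjTranspose, Matrix.conjTranspose_apply, kroneckerMap_apply, mul_comm]

lemma aux_trace_conj_diag {m : Type*} [Fintype m] [DecidableEq m] (W : Matrix m m ℂ)
    (hW : star W * W = 1) (a b : m → ℝ) :
    Matrix.trace ((W * Matrix.diagonal (fun i => (a i : ℂ)) * star W) *
      (W * Matrix.diagonal (fun i => (b i : ℂ)) * star W)) = ((∑ i, b i * a i : ℝ) : ℂ) := by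
  have h1 : (W * Matrix.diagonal (fun i => (a i : ℂ)) * star W) *
      (W * Matrix.diagonal (fun i => (b i : ℂ)) * star W)
      = W * (Matrix.diagonal (fun i => (a i : ℂ)) * Matrix.diagonal (fun i => (b i : ℂ)))
          * star W := by
    simp only [Matrix.mul_assoc]
    rw [← Matrix.mul_assoc (star W) W, hW, Matrix.one_mul]
  rw [h1, Matrix.trace_mul_cycle, ← Matrix.mul_assoc, hW, Matrix.one_mul,
    Matrix.diagonal_mul_diagonal, Matrix.trace_diagonal]
  push_cast
  exact Finset.sum_congr rfl fun i _ => (mul_comm _ _)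

lemma aux_ds_rearrange {N : Type*} [Fintype N] [DecidableEq N] {n : ℕ}
    (Bm : Matrix N N ℝ) (hBm : Bm ∈ doublyStochastic ℝ N)
    (d e : N → ℝ) (lam En : Fin n → ℝ) (hlam : Antitone lam) (hEn : Monotone En)
    (σ τ : Fin n ≃ N) (hd : ∀ q, d q = lam (σ.symm q)) (he : ∀ k, En k = e (τ k)) :
    ∑ k, En k * lam k ≤ ∑ q, ∑ p, Bm p q * (d q * e p) := by
  classical
  obtain ⟨w, hw0, hw1, hwB⟩ := exists_eq_sum_perm_of_mem_doublyStochastic hBm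
  have hAV : Antivary lam En := by
    intro i j h
    have hij : i ≤ j := by
      by_contra hc
      exact absurd (hEn (le_of_not_ge hc)) (not_le.2 h)
    exact hlam hij
  have hperm : ∀ π : Equiv.Perm N, ∑ k, En k * lam k ≤ ∑ p, d (π p) * e p := by
    intro π
    have hν : ∀ k : Fin n, d (π (τ k)) = lam ((τ.trans (π.trans σ.symm)) k) := by
      intro k; rw [hd]; rfl
    have hsum : ∑ p, d (π p) * e p = ∑ k, lam ((τ.trans (π.trans σ.symm)) k) * En k := by
      rw [← Equiv.sum_comp τ (fun p => d (π p) * e p)]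
      exact Finset.sum_congr rfl fun k _ => by rw [hν, he, mul_comm]
    rw [hsum]
    have h2 := hAV.sum_mul_le_sum_comp_perm_mul (σ := (τ.trans (π.trans σ.symm)))
    calc ∑ k, En k * lam k = ∑ k, lam k * En k :=
          Finset.sum_congr rfl fun k _ => mul_comm _ _
      _ ≤ _ := h2
  have hB' : ∀ p q, Bm p q = ∑ π : Equiv.Perm N, (if π p = q then w π else 0) := by
    intro p q
    rw [← hwB]
    simp [Matrix.sum_apply, Equiv.Perm.permMatrix, PEquiv.toMatrix_apply,
      Equiv.toPEquiv_apply, mul_ite, mul_one, mul_zero, eq_comm]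
  have expand : ∑ q, ∑ p, Bm p q * (d q * e p)
      = ∑ π : Equiv.Perm N, w π * ∑ p, d (π p) * e p := by
    calc ∑ q, ∑ p, Bm p q * (d q * e p)
        = ∑ q, ∑ p, ∑ π : Equiv.Perm N, (if π p = q then w π * (d q * e p) else 0) := by
          simp only [hB', Finset.sum_mul, ite_mul, zero_mul]
      _ = ∑ q, ∑ π : Equiv.Perm N, ∑ p, (if π p = q then w π * (d q * e p) else 0) :=
          Finset.sum_congr rfl fun q _ => Finset.sum_comm
      _ = ∑ π : Equiv.Perm N, ∑ q, ∑ p, (if π p = q then w π * (d q * e p) else 0) :=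
          Finset.sum_comm
      _ = ∑ π : Equiv.Perm N, ∑ p, ∑ q, (if π p = q then w π * (d q * e p) else 0) :=
          Finset.sum_congr rfl fun π _ => Finset.sum_comm
      _ = ∑ π : Equiv.Perm N, w π * ∑ p, d (π p) * e p := by
          refine Finset.sum_congr rfl fun π _ => ?_
          rw [Finset.mul_sum]
          refine Finset.sum_congr rfl fun p _ => ?_
          simp [Finset.sum_ite_eq]
  rw [expand]
  calc ∑ k, En k * lam k = ∑ π : Equiv.Perm N, w π * ∑ k, En k * lam k := by
        rw [← Finset.sum_mul, hw1, one_mul]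
    _ ≤ ∑ π : Equiv.Perm N, w π * ∑ p, d (π p) * e p :=
        Finset.sum_le_sum fun π _ => mul_le_mul_of_nonneg_left (hperm π) (hw0 π)

end Aux

/-- QMP inequalities from the nonnegativity of the ergotropic gap:
for decreasingly ordered local and global eigenvalues and any increasingly ordered
"energy" sequences `E^B`, `E^C`,
`Σ E^B_k λ^B_k + Σ E^C_k λ^C_k ≥ Σ (E^B + E^C)_k λ^{BC}_k`, where `(E^B + E^C)` is the
increasing rearrangement of the sums. -/
theorem qmp_inequalities {dB dC : ℕ}
    (ρ : Matrix (Fin dB × Fin dC) (Fin dB × Fin dC) ℂ) (hρ : IsDensityMatrix ρ)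
    (lamB : Fin dB → ℝ) (hlamB : Antitone lamB)
    (WB : Matrix (Fin dB) (Fin dB) ℂ) (hWB : WB ∈ Matrix.unitaryGroup (Fin dB) ℂ)
    (hρB : ptraceC ρ = WB * Matrix.diagonal (fun i => (lamB i : ℂ)) * star WB)
    (lamC : Fin dC → ℝ) (hlamC : Antitone lamC)
    (WC : Matrix (Fin dC) (Fin dC) ℂ) (hWC : WC ∈ Matrix.unitaryGroup (Fin dC) ℂ)
    (hρC : ptraceB ρ = WC * Matrix.diagonal (fun i => (lamC i : ℂ)) * star WC)
    (σ : Fin (dB * dC) ≃ (Fin dB × Fin dC))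
    (lamBC : Fin (dB * dC) → ℝ) (hlamBC : Antitone lamBC)
    (WBC : Matrix (Fin dB × Fin dC) (Fin dB × Fin dC) ℂ)
    (hWBC : WBC ∈ Matrix.unitaryGroup (Fin dB × Fin dC) ℂ)
    (hρBC : ρ = WBC * Matrix.diagonal (fun p => (lamBC (σ.symm p) : ℂ)) * star WBC)
    (EnB : Fin dB → ℝ) (hEnB : Monotone EnB)
    (EnC : Fin dC → ℝ) (hEnC : Monotone EnC)
    -- `EnBC` is the increasing rearrangement of the multiset `{E^B_i + E^C_j}`
    (EnBC : Fin (dB * dC) → ℝ) (hEnBC : Monotone EnBC)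
    (τ : Fin (dB * dC) ≃ (Fin dB × Fin dC))
    (hτ : ∀ k, EnBC k = EnB (τ k).1 + EnC (τ k).2) :
    ∑ k, EnBC k * lamBC k ≤ ∑ i, EnB i * lamB i + ∑ j, EnC j * lamC j := by
  classical
  have hWB2 : star WB * WB = 1 := Matrix.mem_unitaryGroup_iff'.mp hWB
  have hWC1 : WC * star WC = 1 := Matrix.mem_unitaryGroup_iff.mp hWC
  have hWC2 : star WC * WC = 1 := Matrix.mem_unitaryGroup_iff'.mp hWC
  have hWB1 : WB * star WB = 1 := Matrix.mem_unitaryGroup_iff.mp hWB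
  have hWBC1 : WBC * star WBC = 1 := Matrix.mem_unitaryGroup_iff.mp hWBC
  have hWBC2 : star WBC * WBC = 1 := Matrix.mem_unitaryGroup_iff'.mp hWBC
  set EBd : Matrix (Fin dB) (Fin dB) ℂ := Matrix.diagonal (fun i => (EnB i : ℂ)) with hEBd
  set ECd : Matrix (Fin dC) (Fin dC) ℂ := Matrix.diagonal (fun j => (EnC j : ℂ)) with hECd
  set HE : Matrix (Fin dB × Fin dC) (Fin dB × Fin dC) ℂ :=
    Matrix.diagonal (fun p : Fin dB × Fin dC => ((EnB p.1 + EnC p.2 : ℝ) : ℂ)) with hHEdef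
  set D : Matrix (Fin dB × Fin dC) (Fin dB × Fin dC) ℂ :=
    Matrix.diagonal (fun p : Fin dB × Fin dC => (lamBC (σ.symm p) : ℂ)) with hDdef
  set U : Matrix (Fin dB × Fin dC) (Fin dB × Fin dC) ℂ := WB ⊗ₖ WC with hUdef
  set M : Matrix (Fin dB × Fin dC) (Fin dB × Fin dC) ℂ := star U * WBC with hMdef
  have hUstar : star U = star WB ⊗ₖ star WC := aux_kron_star WB WC
  have hU1 : U * star U = 1 := by
    rw [hUdef, hUstar, ← Matrix.mul_kronecker_mul, hWB1, hWC1, Matrix.one_kronecker_one]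
  have hU2 : star U * U = 1 := by
    rw [hUdef, hUstar, ← Matrix.mul_kronecker_mul, hWB2, hWC2, Matrix.one_kronecker_one]
  have hM1 : M * star M = 1 := by
    rw [hMdef, Matrix.star_mul, star_star, Matrix.mul_assoc, ← Matrix.mul_assoc WBC, hWBC1,
      Matrix.one_mul, hU2]
  have hM2 : star M * M = 1 := by
    rw [hMdef, Matrix.star_mul, star_star, Matrix.mul_assoc, ← Matrix.mul_assoc U, hU1,
      Matrix.one_mul, hWBC2]
  have hHE : HE = EBd ⊗ₖ (1 : Matrix (Fin dC) (Fin dC) ℂ)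
      + (1 : Matrix (Fin dB) (Fin dB) ℂ) ⊗ₖ ECd := by
    ext ⟨i, k⟩ ⟨j, l⟩
    by_cases hij : i = j <;> by_cases hkl : k = l <;>
      simp [hHEdef, hEBd, hECd, Matrix.diagonal_apply, Matrix.one_apply, Prod.ext_iff,
        hij, hkl, kroneckerMap_apply, Matrix.add_apply]
  have hH : U * HE * star U = (WB * EBd * star WB) ⊗ₖ (1 : Matrix (Fin dC) (Fin dC) ℂ)
      + (1 : Matrix (Fin dB) (Fin dB) ℂ) ⊗ₖ (WC * ECd * star WC) := by
    rw [hHE, Matrix.mul_add, Matrix.add_mul, hUdef, hUstar,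
      ← Matrix.mul_kronecker_mul, ← Matrix.mul_kronecker_mul,
      ← Matrix.mul_kronecker_mul, ← Matrix.mul_kronecker_mul,
      Matrix.mul_one, hWC1, Matrix.mul_one, hWB1]
  have keyA : Matrix.trace (ρ * (U * HE * star U))
      = ((∑ i, EnB i * lamB i : ℝ) : ℂ) + ((∑ j, EnC j * lamC j : ℝ) : ℂ) := by
    rw [hH, Matrix.mul_add, Matrix.trace_add, aux_trace_mul_kron_one, aux_trace_mul_one_kron,
      hρB, hρC, aux_trace_conj_diag WB hWB2 lamB EnB, aux_trace_conj_diag WC hWC2 lamC EnC]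
  have keyB : Matrix.trace (ρ * (U * HE * star U))
      = Matrix.trace (D * (star M * HE * M)) := by
    rw [hρBC]
    have h1 : (WBC * D * star WBC) * (U * HE * star U)
        = WBC * (D * (star WBC * (U * HE * star U))) := by
      simp only [Matrix.mul_assoc]
    rw [h1, Matrix.trace_mul_comm]
    have h2 : D * (star WBC * (U * HE * star U)) * WBC
        = D * (star M * HE * M) := by
      rw [hMdef, Matrix.star_mul, star_star]
      simp only [Matrix.mul_assoc]
    rw [h2]
  have hN : ∀ q, (star M * HE * M) q q
      = ∑ p, star (M p q) * ((EnB p.1 + EnC p.2 : ℝ) : ℂ) * M p q := by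
    intro q
    rw [Matrix.mul_apply]
    refine Finset.sum_congr rfl fun p _ => ?_
    rw [Matrix.mul_diagonal]
    rfl
  have keyC : Matrix.trace (D * (star M * HE * M))
      = ((∑ q : Fin dB × Fin dC, ∑ p : Fin dB × Fin dC, Complex.normSq (M p q)
            * (lamBC (σ.symm q) * (EnB p.1 + EnC p.2)) : ℝ) : ℂ) := by
    have h1 : Matrix.trace (D * (star M * HE * M))
        = ∑ q, (lamBC (σ.symm q) : ℂ) * (star M * HE * M) q q := by
      rw [Matrix.trace]
      refine Finset.sum_congr rfl fun q _ => ?_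
      show (D * (star M * HE * M)) q q = _
      rw [Matrix.mul_apply]
      simp [hDdef, Matrix.diagonal_apply, ite_mul, zero_mul, Finset.sum_ite_eq]
    rw [h1, Complex.ofReal_sum]
    refine Finset.sum_congr rfl fun q _ => ?_
    rw [hN, Finset.mul_sum, Complex.ofReal_sum]
    refine Finset.sum_congr rfl fun p _ => ?_
    push_cast
    rw [Complex.star_def, Complex.normSq_eq_conj_mul_self]
    ring
  have hreal : (∑ q : Fin dB × Fin dC, ∑ p : Fin dB × Fin dC, Complex.normSq (M p q)
        * (lamBC (σ.symm q) * (EnB p.1 + EnC p.2)))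
      = ∑ i, EnB i * lamB i + ∑ j, EnC j * lamC j := by
    have h := keyA.symm.trans (keyB.trans keyC)
    exact_mod_cast h.symm
  set Bm : Matrix (Fin dB × Fin dC) (Fin dB × Fin dC) ℝ :=
    Matrix.of fun p q => Complex.normSq (M p q) with hBmdef
  have hsq : ∀ p q, ((Complex.normSq (M p q) : ℝ) : ℂ) = M p q * star (M p q) :=
    fun p q => (Complex.mul_conj _).symm
  have hsq' : ∀ p q, ((Complex.normSq (M p q) : ℝ) : ℂ) = star (M p q) * M p q :=
    fun p q => Complex.normSq_eq_conj_mul_self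
  have hBm : Bm ∈ doublyStochastic ℝ (Fin dB × Fin dC) := by
    rw [mem_doublyStochastic_iff_sum]
    refine ⟨fun p q => Complex.normSq_nonneg _, fun p => ?_, fun q => ?_⟩
    · have h := congrFun (congrFun hM1 p) p
      simp only [Matrix.mul_apply, Matrix.one_apply_eq, Matrix.star_eq_conjTranspose,
        Matrix.conjTranspose_apply] at h
      have h2 : ((∑ q : Fin dB × Fin dC, Complex.normSq (M p q) : ℝ) : ℂ) = 1 := by
        push_cast
        rw [← h]
        exact Finset.sum_congr rfl fun q _ => by
          rw [hsq p q]
      exact_mod_cast h2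
    · have h := congrFun (congrFun hM2 q) q
      simp only [Matrix.mul_apply, Matrix.one_apply_eq, Matrix.star_eq_conjTranspose,
        Matrix.conjTranspose_apply] at h
      have h2 : ((∑ p : Fin dB × Fin dC, Complex.normSq (M p q) : ℝ) : ℂ) = 1 := by
        push_cast
        rw [← h]
        exact Finset.sum_congr rfl fun p _ => by
          rw [hsq' p q]
      exact_mod_cast h2
  have hfin := aux_ds_rearrange Bm hBm
    (fun q => lamBC (σ.symm q)) (fun p => EnB p.1 + EnC p.2) lamBC EnBC hlamBC hEnBC
    σ τ (fun q => rfl) hτ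
  rw [← hreal]
  exact hfin
end

section
/- Two-qubit product-state spectral inequality: let ρ_B, ρ_C be qubit density matrices with eigenvalues λ^B_0 ≥ λ^B_1 and λ^C_0 ≥ λ^C_1, and let ρ̃_{BC} be any density matrix on C²⊗C² unitarily equivalent to ρ_B ⊗ ρ_C, with marginals having smaller eigenvalues λ̃^B_1 and λ̃^C_1. Then λ̃^B_1 + λ̃^C_1 ≥ λ^B_1 + λ^C_1. -/
open Matrix Kronecker
open scoped ComplexOrder

namespace TwoQubitAux

/-! ### Basic trace / vecMulVec identities -/

lemma trace_mul_vecMulVec {n : Type*} [Fintype n] (A : Matrix n n ℂ) (x y : n → ℂ) :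
    Matrix.trace (A * Matrix.vecMulVec x y) = y ⬝ᵥ (A *ᵥ x) := by
  simp only [Matrix.trace, Matrix.diag, Matrix.mul_apply, Matrix.vecMulVec_apply,
    dotProduct, Matrix.mulVec, Finset.mul_sum]
  exact Finset.sum_congr rfl fun p _ => Finset.sum_congr rfl fun q _ => by ring

lemma vecMulVec_prod (v w : Fin 2 → ℂ) :
    Matrix.vecMulVec (fun p : Fin 2 × Fin 2 => v p.1 * w p.2)
        (star fun p : Fin 2 × Fin 2 => v p.1 * w p.2)
      = (Matrix.vecMulVec v (star v)) ⊗ₖ (Matrix.vecMulVec w (star w)) := by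
  ext ⟨i, k⟩ ⟨j, l⟩
  simp [Matrix.vecMulVec_apply, mul_mul_mul_comm]

lemma trace_kron_one (ρ : Matrix (Fin 2 × Fin 2) (Fin 2 × Fin 2) ℂ)
    (P : Matrix (Fin 2) (Fin 2) ℂ) :
    Matrix.trace (ρ * (P ⊗ₖ (1 : Matrix (Fin 2) (Fin 2) ℂ)))
      = Matrix.trace (ptraceC ρ * P) := by
  simp only [Matrix.trace, Matrix.diag, Matrix.mul_apply, ptraceC, Matrix.of_apply,
    Fintype.sum_prod_type, Matrix.kroneckerMap_apply, Matrix.one_apply, Finset.sum_mul,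
    mul_ite, mul_one, mul_zero, Finset.sum_ite_eq', Finset.mem_univ, if_true]
  show (∑ i, ∑ k, ∑ j, ρ (i,k) (j,k) * P j i) = ∑ i, ∑ j, ∑ k, ρ (i,k) (j,k) * P j i
  exact Finset.sum_congr rfl fun i _ => Finset.sum_comm

lemma trace_one_kron (ρ : Matrix (Fin 2 × Fin 2) (Fin 2 × Fin 2) ℂ)
    (Q : Matrix (Fin 2) (Fin 2) ℂ) :
    Matrix.trace (ρ * ((1 : Matrix (Fin 2) (Fin 2) ℂ) ⊗ₖ Q))
      = Matrix.trace (ptraceB ρ * Q) := by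
  simp only [Matrix.trace, Matrix.diag, Matrix.mul_apply, ptraceB, Matrix.of_apply,
    Fintype.sum_prod_type, Matrix.kroneckerMap_apply, Matrix.one_apply, ite_mul, one_mul,
    zero_mul, mul_ite, mul_zero, Finset.sum_mul]
  trans (∑ i : Fin 2, ∑ k : Fin 2, ∑ l : Fin 2, ∑ j : Fin 2,
      if j = i then ρ (i,k) (j,l) * Q l k else 0)
  · exact Finset.sum_congr rfl fun i _ => Finset.sum_congr rfl fun k _ => Finset.sum_comm
  simp only [Finset.sum_ite_eq', Finset.mem_univ, if_true]
  trans (∑ k : Fin 2, ∑ i : Fin 2, ∑ l : Fin 2, ρ (i,k) (i,l) * Q l k)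
  · exact Finset.sum_comm
  exact Finset.sum_congr rfl fun k _ => Finset.sum_comm

/-! ### Positive semidefiniteness lemmas -/

lemma conjTranspose_kron {m n : Type*} (A : Matrix m m ℂ) (B : Matrix n n ℂ) :
    (A ⊗ₖ B)ᴴ = Aᴴ ⊗ₖ Bᴴ := by
  ext ⟨i, k⟩ ⟨j, l⟩
  simp [Matrix.conjTranspose_apply]

lemma psd_kron {m n : Type*} [Fintype m] [Fintype n] [DecidableEq m] [DecidableEq n]
    {X : Matrix m m ℂ} {Y : Matrix n n ℂ}
    (hX : X.PosSemidef) (hY : Y.PosSemidef) : (X ⊗ₖ Y).PosSemidef := by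
  exact hX.kronecker hY

lemma conj_diag_psd {n : Type*} [Fintype n] [DecidableEq n]
    (V : Matrix n n ℂ) (d : n → ℝ) (hd : ∀ i, 0 ≤ d i) :
    (V * Matrix.diagonal (fun i => ((d i : ℝ) : ℂ)) * Vᴴ).PosSemidef := by
  refine Matrix.PosSemidef.mul_mul_conjTranspose_same ?_ _
  refine Matrix.PosSemidef.diagonal ?_
  intro i
  exact Complex.zero_le_real.mpr (hd i)

lemma diag_helper {n : Type*} [Fintype n] [DecidableEq n] (a : ℝ) (e : n → ℝ) :
    (a : ℂ) • (1 : Matrix n n ℂ) - Matrix.diagonal ((RCLike.ofReal : ℝ → ℂ) ∘ e)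
      = Matrix.diagonal (fun i => ((a - e i : ℝ) : ℂ)) := by
  ext i j
  by_cases h : i = j <;>
    simp [h, Matrix.diagonal_apply, Matrix.one_apply, Complex.ofReal_sub]

lemma diag_helper' {n : Type*} [Fintype n] [DecidableEq n] (a : ℝ) (e : n → ℝ) :
    Matrix.diagonal ((RCLike.ofReal : ℝ → ℂ) ∘ e) - (a : ℂ) • (1 : Matrix n n ℂ)
      = Matrix.diagonal (fun i => ((e i - a : ℝ) : ℂ)) := by
  ext i j
  by_cases h : i = j <;>
    simp [h, Matrix.diagonal_apply, Matrix.one_apply, Complex.ofReal_sub]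

lemma smul_one_sub_psd {n : Type*} [Fintype n] [DecidableEq n] {A : Matrix n n ℂ}
    (hA : A.IsHermitian) {a : ℝ} (h : ∀ i, hA.eigenvalues i ≤ a) :
    ((a : ℂ) • 1 - A).PosSemidef := by
  have hV := (Matrix.mem_unitaryGroup_iff).mp (hA.eigenvectorUnitary).2
  have smul1 : (a : ℂ) • (1 : Matrix n n ℂ) = (hA.eigenvectorUnitary : Matrix n n ℂ)
      * ((a : ℂ) • 1) * star (hA.eigenvectorUnitary : Matrix n n ℂ) := by
    rw [Matrix.mul_smul, Matrix.mul_one, Matrix.smul_mul, hV]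
  have key : (a : ℂ) • 1 - A = (hA.eigenvectorUnitary : Matrix n n ℂ)
      * Matrix.diagonal (fun i => ((a - hA.eigenvalues i : ℝ) : ℂ))
      * (hA.eigenvectorUnitary : Matrix n n ℂ)ᴴ := by
    conv_lhs => rw [hA.spectral_theorem, Unitary.conjStarAlgAut_apply, smul1]
    rw [← Matrix.sub_mul, ← Matrix.mul_sub, diag_helper, Matrix.star_eq_conjTranspose]
  rw [key]
  exact conj_diag_psd _ _ (fun i => by simpa using sub_nonneg.mpr (h i))

lemma sub_smul_one_psd {n : Type*} [Fintype n] [DecidableEq n] {A : Matrix n n ℂ}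
    (hA : A.IsHermitian) {a : ℝ} (h : ∀ i, a ≤ hA.eigenvalues i) :
    (A - (a : ℂ) • 1).PosSemidef := by
  have hV := (Matrix.mem_unitaryGroup_iff).mp (hA.eigenvectorUnitary).2
  have smul1 : (a : ℂ) • (1 : Matrix n n ℂ) = (hA.eigenvectorUnitary : Matrix n n ℂ)
      * ((a : ℂ) • 1) * star (hA.eigenvectorUnitary : Matrix n n ℂ) := by
    rw [Matrix.mul_smul, Matrix.mul_one, Matrix.smul_mul, hV]
  have key : A - (a : ℂ) • 1 = (hA.eigenvectorUnitary : Matrix n n ℂ)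
      * Matrix.diagonal (fun i => ((hA.eigenvalues i - a : ℝ) : ℂ))
      * (hA.eigenvectorUnitary : Matrix n n ℂ)ᴴ := by
    conv_lhs => rw [hA.spectral_theorem, Unitary.conjStarAlgAut_apply, smul1]
    rw [← Matrix.sub_mul, ← Matrix.mul_sub, diag_helper', Matrix.star_eq_conjTranspose]
  rw [key]
  exact conj_diag_psd _ _ (fun i => by simpa using sub_nonneg.mpr (h i))

lemma psd_smul_one {n : Type*} [Fintype n] [DecidableEq n] {b : ℝ} (hb : 0 ≤ b) :
    ((b : ℂ) • (1 : Matrix n n ℂ)).PosSemidef := by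
  rw [Matrix.smul_one_eq_diagonal]
  exact Matrix.PosSemidef.diagonal fun i => Complex.zero_le_real.mpr hb

lemma decomp_le (X Y : Matrix (Fin 2) (Fin 2) ℂ) (a b : ℝ) :
    ((a * b : ℝ) : ℂ) • (1 : Matrix (Fin 2 × Fin 2) (Fin 2 × Fin 2) ℂ) - X ⊗ₖ Y
      = ((a : ℂ) • 1 - X) ⊗ₖ ((b : ℂ) • (1 : Matrix (Fin 2) (Fin 2) ℂ))
        + X ⊗ₖ ((b : ℂ) • 1 - Y) := by
  ext ⟨i, k⟩ ⟨j, l⟩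
  by_cases h1 : i = j <;> by_cases h2 : k = l <;>
    simp [h1, h2, Matrix.one_apply, Prod.ext_iff] <;> ring

lemma decomp_ge (X Y : Matrix (Fin 2) (Fin 2) ℂ) (a b : ℝ) :
    X ⊗ₖ Y - ((a * b : ℝ) : ℂ) • (1 : Matrix (Fin 2 × Fin 2) (Fin 2 × Fin 2) ℂ)
      = (X - (a : ℂ) • 1) ⊗ₖ Y
        + ((a : ℂ) • (1 : Matrix (Fin 2) (Fin 2) ℂ)) ⊗ₖ (Y - (b : ℂ) • 1) := by
  ext ⟨i, k⟩ ⟨j, l⟩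
  by_cases h1 : i = j <;> by_cases h2 : k = l <;>
    simp [h1, h2, Matrix.one_apply, Prod.ext_iff] <;> ring

lemma psd_quadform_re_nonneg {n : Type*} [Fintype n] {M : Matrix n n ℂ}
    (hM : M.PosSemidef) (u : n → ℂ) : 0 ≤ (star u ⬝ᵥ (M *ᵥ u)).re := by
  have := hM.dotProduct_mulVec_nonneg u
  rw [Complex.le_def] at this
  simpa using this.1

lemma quadform_smul_one_sub {n : Type*} [Fintype n] [DecidableEq n]
    (c : ℝ) (M : Matrix n n ℂ) (u : n → ℂ) (hu : star u ⬝ᵥ u = 1) :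
    star u ⬝ᵥ ((((c : ℂ) • 1 - M)) *ᵥ u) = (c : ℂ) - star u ⬝ᵥ (M *ᵥ u) := by
  rw [Matrix.sub_mulVec, dotProduct_sub, Matrix.smul_mulVec,
    Matrix.one_mulVec, dotProduct_smul, hu]
  simp

lemma quadform_sub_smul_one {n : Type*} [Fintype n] [DecidableEq n]
    (c : ℝ) (M : Matrix n n ℂ) (u : n → ℂ) (hu : star u ⬝ᵥ u = 1) :
    star u ⬝ᵥ (((M - (c : ℂ) • 1)) *ᵥ u) = star u ⬝ᵥ (M *ᵥ u) - (c : ℂ) := by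
  rw [Matrix.sub_mulVec, dotProduct_sub, Matrix.smul_mulVec,
    Matrix.one_mulVec, dotProduct_smul, hu]
  simp

lemma kron_quadform_le {X Y : Matrix (Fin 2) (Fin 2) ℂ} (hX : X.PosSemidef) (hY : Y.PosSemidef)
    (hXh : X.IsHermitian) (hYh : Y.IsHermitian) {a b : ℝ}
    (ha : ∀ i, hXh.eigenvalues i ≤ a) (hb : ∀ i, hYh.eigenvalues i ≤ b)
    (u : Fin 2 × Fin 2 → ℂ) (hu : star u ⬝ᵥ u = 1) :
    (star u ⬝ᵥ ((X ⊗ₖ Y) *ᵥ u)).re ≤ a * b := by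
  have hb0 : 0 ≤ b := le_trans (hY.eigenvalues_nonneg 0) (hb 0)
  have hpsd : (((a * b : ℝ) : ℂ) • 1 - X ⊗ₖ Y).PosSemidef := by
    rw [decomp_le]
    exact (psd_kron (smul_one_sub_psd hXh ha) (psd_smul_one hb0)).add
      (psd_kron hX (smul_one_sub_psd hYh hb))
  have h := psd_quadform_re_nonneg hpsd u
  rw [quadform_smul_one_sub _ _ _ hu] at h
  simp only [Complex.sub_re, Complex.ofReal_re] at h
  linarith

lemma kron_quadform_ge {X Y : Matrix (Fin 2) (Fin 2) ℂ} (hX : X.PosSemidef) (hY : Y.PosSemidef)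
    (hXh : X.IsHermitian) (hYh : Y.IsHermitian) {a b : ℝ}
    (ha : ∀ i, a ≤ hXh.eigenvalues i) (hb : ∀ i, b ≤ hYh.eigenvalues i) (ha0 : 0 ≤ a)
    (u : Fin 2 × Fin 2 → ℂ) (hu : star u ⬝ᵥ u = 1) :
    a * b ≤ (star u ⬝ᵥ ((X ⊗ₖ Y) *ᵥ u)).re := by
  have hpsd : (X ⊗ₖ Y - ((a * b : ℝ) : ℂ) • 1).PosSemidef := by
    rw [decomp_ge]
    exact (psd_kron (sub_smul_one_psd hXh ha) hY).add
      (psd_kron (psd_smul_one ha0) (sub_smul_one_psd hYh hb))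
  have h := psd_quadform_re_nonneg hpsd u
  rw [quadform_sub_smul_one _ _ _ hu] at h
  simp only [Complex.sub_re, Complex.ofReal_re] at h
  linarith

/-! ### Vectors and partial traces -/

lemma dot_prod_vec (x x' y y' : Fin 2 → ℂ) :
    star (fun p : Fin 2 × Fin 2 => x p.1 * y p.2) ⬝ᵥ (fun p : Fin 2 × Fin 2 => x' p.1 * y' p.2)
      = (star x ⬝ᵥ x') * (star y ⬝ᵥ y') := by
  simp only [dotProduct, Pi.star_apply, Fintype.sum_prod_type, Finset.sum_mul,
    Finset.mul_sum, star_mul']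
  rw [Finset.sum_comm]
  exact Finset.sum_congr rfl fun i _ => Finset.sum_congr rfl fun k _ => by ring

lemma star_dot_eigvec {n : Type*} [Fintype n] [DecidableEq n] {A : Matrix n n ℂ}
    (hA : A.IsHermitian) (i : n) :
    star ⇑(hA.eigenvectorBasis i) ⬝ᵥ ⇑(hA.eigenvectorBasis i) = 1 := by
  have h := hA.eigenvectorBasis.orthonormal.1 i
  have := inner_self_eq_norm_sq_to_K (𝕜 := ℂ) (hA.eigenvectorBasis i)
  rw [EuclideanSpace.inner_eq_star_dotProduct] at this
  rw [h] at this
  rw [dotProduct_comm]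
  simpa using this

lemma sum_colProj {W : Matrix (Fin 2) (Fin 2) ℂ} (hW : W * Wᴴ = 1) :
    ∑ k, Matrix.vecMulVec (fun l => W l k) (star fun l => W l k)
      = (1 : Matrix (Fin 2) (Fin 2) ℂ) := by
  ext l l'
  have h2 := congrFun (congrFun hW l) l'
  simp only [Matrix.mul_apply, Matrix.conjTranspose_apply] at h2
  simpa [Matrix.sum_apply, Matrix.vecMulVec_apply, mul_comm] using h2

lemma kron_sum_right {m n : Type*} [Fintype n] (A : Matrix m m ℂ)
    (B : n → Matrix (Fin 2) (Fin 2) ℂ) :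
    A ⊗ₖ (∑ k, B k) = ∑ k, A ⊗ₖ B k := by
  ext ⟨i, a⟩ ⟨j, b⟩
  simp [Matrix.sum_apply, Finset.mul_sum]

lemma sum_kron_left {m n : Type*} [Fintype n] (A : Matrix m m ℂ)
    (B : n → Matrix (Fin 2) (Fin 2) ℂ) :
    (∑ k, B k) ⊗ₖ A = ∑ k, B k ⊗ₖ A := by
  ext ⟨a, i⟩ ⟨b, j⟩
  simp [Matrix.sum_apply, Finset.sum_mul]

lemma conj_quadform {n : Type*} [Fintype n] (U M : Matrix n n ℂ) (z : n → ℂ) :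
    star z ⬝ᵥ ((U * M * star U) *ᵥ z)
      = star (star U *ᵥ z) ⬝ᵥ (M *ᵥ (star U *ᵥ z)) := by
  rw [Matrix.star_mulVec, ← Matrix.mulVec_mulVec, ← Matrix.mulVec_mulVec,
    Matrix.dotProduct_mulVec (star z), Matrix.star_eq_conjTranspose,
    Matrix.conjTranspose_conjTranspose]

lemma sum_eigs_eq_trace {n : Type*} [Fintype n] [DecidableEq n] {A : Matrix n n ℂ}
    (hA : A.IsHermitian) : A.trace = ∑ i, (hA.eigenvalues i : ℂ) := by
  conv_lhs => rw [hA.spectral_theorem, Unitary.conjStarAlgAut_apply]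
  rw [Matrix.trace_mul_cycle,
    (Matrix.mem_unitaryGroup_iff').mp (hA.eigenvectorUnitary).2, Matrix.one_mul,
    Matrix.trace_diagonal]
  rfl

lemma sum_quadform_right (ρ : Matrix (Fin 2 × Fin 2) (Fin 2 × Fin 2) ℂ) (v : Fin 2 → ℂ)
    (w : Fin 2 → Fin 2 → ℂ)
    (horth : ∑ k, Matrix.vecMulVec (w k) (star (w k)) = 1) :
    ∑ k, star (fun p : Fin 2 × Fin 2 => v p.1 * w k p.2)
        ⬝ᵥ (ρ *ᵥ fun p : Fin 2 × Fin 2 => v p.1 * w k p.2)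
      = star v ⬝ᵥ (ptraceC ρ *ᵥ v) := by
  calc ∑ k, star (fun p : Fin 2 × Fin 2 => v p.1 * w k p.2)
        ⬝ᵥ (ρ *ᵥ fun p : Fin 2 × Fin 2 => v p.1 * w k p.2)
      = ∑ k, Matrix.trace (ρ * (Matrix.vecMulVec v (star v)
          ⊗ₖ Matrix.vecMulVec (w k) (star (w k)))) := by
        refine Finset.sum_congr rfl fun k _ => ?_
        rw [← vecMulVec_prod, trace_mul_vecMulVec]
    _ = Matrix.trace (ρ * (Matrix.vecMulVec v (star v) ⊗ₖ (1 : Matrix (Fin 2) (Fin 2) ℂ))) := by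
        rw [← horth, kron_sum_right, Matrix.mul_sum, Matrix.trace_sum]
    _ = Matrix.trace (ptraceC ρ * Matrix.vecMulVec v (star v)) := trace_kron_one ρ _
    _ = star v ⬝ᵥ (ptraceC ρ *ᵥ v) := trace_mul_vecMulVec _ _ _

lemma sum_quadform_left (ρ : Matrix (Fin 2 × Fin 2) (Fin 2 × Fin 2) ℂ) (w : Fin 2 → ℂ)
    (v : Fin 2 → Fin 2 → ℂ)
    (horth : ∑ i, Matrix.vecMulVec (v i) (star (v i)) = 1) :
    ∑ i, star (fun p : Fin 2 × Fin 2 => v i p.1 * w p.2)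
        ⬝ᵥ (ρ *ᵥ fun p : Fin 2 × Fin 2 => v i p.1 * w p.2)
      = star w ⬝ᵥ (ptraceB ρ *ᵥ w) := by
  calc ∑ i, star (fun p : Fin 2 × Fin 2 => v i p.1 * w p.2)
        ⬝ᵥ (ρ *ᵥ fun p : Fin 2 × Fin 2 => v i p.1 * w p.2)
      = ∑ i, Matrix.trace (ρ * (Matrix.vecMulVec (v i) (star (v i))
          ⊗ₖ Matrix.vecMulVec w (star w))) := by
        refine Finset.sum_congr rfl fun i _ => ?_
        rw [← vecMulVec_prod, trace_mul_vecMulVec]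
    _ = Matrix.trace (ρ * ((1 : Matrix (Fin 2) (Fin 2) ℂ) ⊗ₖ Matrix.vecMulVec w (star w))) := by
        rw [← horth, sum_kron_left, Matrix.mul_sum, Matrix.trace_sum]
    _ = Matrix.trace (ptraceB ρ * Matrix.vecMulVec w (star w)) := trace_one_kron ρ _
    _ = star w ⬝ᵥ (ptraceB ρ *ᵥ w) := trace_mul_vecMulVec _ _ _

end TwoQubitAux

open TwoQubitAux in
/-- Two-qubit product-state spectral inequality: if `ρ̃_BC` is unitarily
equivalent to a product `ρ_B ⊗ ρ_C` of qubit states, the sum of the smaller eigenvalues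
of its marginals is at least the sum of the smaller eigenvalues of `ρ_B` and `ρ_C`. -/
theorem two_qubit_marginal_min_eigenvalue_inequality
    (ρB ρC : Matrix (Fin 2) (Fin 2) ℂ)
    (hρB : IsDensityMatrix ρB) (hρC : IsDensityMatrix ρC)
    (U : Matrix (Fin 2 × Fin 2) (Fin 2 × Fin 2) ℂ)
    (hU : U ∈ Matrix.unitaryGroup (Fin 2 × Fin 2) ℂ)
    (hB : ρB.IsHermitian) (hC : ρC.IsHermitian)
    (htB : (ptraceC (U * (ρB ⊗ₖ ρC) * star U)).IsHermitian)
    (htC : (ptraceB (U * (ρB ⊗ₖ ρC) * star U)).IsHermitian) :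
    min (hB.eigenvalues 0) (hB.eigenvalues 1) + min (hC.eigenvalues 0) (hC.eigenvalues 1)
      ≤ min (htB.eigenvalues 0) (htB.eigenvalues 1)
        + min (htC.eigenvalues 0) (htC.eigenvalues 1) := by
  classical
  have hU1 : U * star U = 1 := (Matrix.mem_unitaryGroup_iff).mp hU
  have hU2 : star U * U = 1 := (Matrix.mem_unitaryGroup_iff').mp hU
  set ρt : Matrix (Fin 2 × Fin 2) (Fin 2 × Fin 2) ℂ := U * (ρB ⊗ₖ ρC) * star U with hρt
  -- eigenvalue abbreviations
  set a' : ℝ := min (hB.eigenvalues 0) (hB.eigenvalues 1) with ha'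
  set a : ℝ := max (hB.eigenvalues 0) (hB.eigenvalues 1) with ha
  set b' : ℝ := min (hC.eigenvalues 0) (hC.eigenvalues 1) with hb'
  set b : ℝ := max (hC.eigenvalues 0) (hC.eigenvalues 1) with hb
  -- eigenvectors of the marginals
  set v : Fin 2 → (Fin 2 → ℂ) := fun i => ⇑(htB.eigenvectorBasis i) with hv
  set w : Fin 2 → (Fin 2 → ℂ) := fun k => ⇑(htC.eigenvectorBasis k) with hw
  set D : Fin 2 → Fin 2 → ℝ := fun i k =>
    (star (fun p : Fin 2 × Fin 2 => v i p.1 * w k p.2)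
      ⬝ᵥ (ρt *ᵥ fun p : Fin 2 × Fin 2 => v i p.1 * w k p.2)).re with hD
  -- orthonormality
  have horthB : ∑ i, Matrix.vecMulVec (v i) (star (v i)) = 1 := by
    have hWB : (htB.eigenvectorUnitary : Matrix (Fin 2) (Fin 2) ℂ)
        * (htB.eigenvectorUnitary : Matrix (Fin 2) (Fin 2) ℂ)ᴴ = 1 := by
      rw [← Matrix.star_eq_conjTranspose]
      exact (Matrix.mem_unitaryGroup_iff).mp (htB.eigenvectorUnitary).2
    exact sum_colProj hWB
  have horthC : ∑ k, Matrix.vecMulVec (w k) (star (w k)) = 1 := by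
    have hWC : (htC.eigenvectorUnitary : Matrix (Fin 2) (Fin 2) ℂ)
        * (htC.eigenvectorUnitary : Matrix (Fin 2) (Fin 2) ℂ)ᴴ = 1 := by
      rw [← Matrix.star_eq_conjTranspose]
      exact (Matrix.mem_unitaryGroup_iff).mp (htC.eigenvectorUnitary).2
    exact sum_colProj hWC
  -- row and column sums of D give the marginal eigenvalues
  have rowB : ∀ i, htB.eigenvalues i = ∑ k, D i k := by
    intro i
    have hq := sum_quadform_right ρt (v i) w horthC
    have h2 : htB.eigenvalues i = (star (v i) ⬝ᵥ (ptraceC ρt *ᵥ v i)).re :=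
      htB.eigenvalues_eq i
    rw [h2, ← hq, Complex.re_sum]
  have colC : ∀ k, htC.eigenvalues k = ∑ i, D i k := by
    intro k
    have hq := sum_quadform_left ρt (w k) v horthB
    have h2 : htC.eigenvalues k = (star (w k) ⬝ᵥ (ptraceB ρt *ᵥ w k)).re :=
      htC.eigenvalues_eq k
    rw [h2, ← hq, Complex.re_sum]
  -- bounds on the entries of D
  have haB : ∀ i, hB.eigenvalues i ≤ a := by
    intro i; fin_cases i
    · exact le_max_left _ _
    · exact le_max_right _ _
  have haB' : ∀ i, a' ≤ hB.eigenvalues i := by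
    intro i; fin_cases i
    · exact min_le_left _ _
    · exact min_le_right _ _
  have hbC : ∀ i, hC.eigenvalues i ≤ b := by
    intro i; fin_cases i
    · exact le_max_left _ _
    · exact le_max_right _ _
  have hbC' : ∀ i, b' ≤ hC.eigenvalues i := by
    intro i; fin_cases i
    · exact min_le_left _ _
    · exact min_le_right _ _
  have ha'0 : 0 ≤ a' := le_min (hρB.1.eigenvalues_nonneg 0) (hρB.1.eigenvalues_nonneg 1)
  have hbound : ∀ i k, a' * b' ≤ D i k ∧ D i k ≤ a * b := by
    intro i k
    set z : Fin 2 × Fin 2 → ℂ := fun p => v i p.1 * w k p.2 with hz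
    have hzunit : star z ⬝ᵥ z = 1 := by
      rw [hz]
      rw [dot_prod_vec, star_dot_eigvec htB i, star_dot_eigvec htC k, one_mul]
    set u : Fin 2 × Fin 2 → ℂ := star U *ᵥ z with hu'
    have hconj : star z ⬝ᵥ (ρt *ᵥ z) = star u ⬝ᵥ ((ρB ⊗ₖ ρC) *ᵥ u) :=
      conj_quadform U (ρB ⊗ₖ ρC) z
    have huunit : star u ⬝ᵥ u = 1 := by
      have h1 := conj_quadform U 1 z
      rw [Matrix.mul_one, hU1, Matrix.one_mulVec, Matrix.one_mulVec, hzunit] at h1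
      exact h1.symm
    have hDik : D i k = (star u ⬝ᵥ ((ρB ⊗ₖ ρC) *ᵥ u)).re := by
      rw [hD]
      simp only
      rw [hconj]
    constructor
    · rw [hDik]
      exact kron_quadform_ge hρB.1 hρC.1 hB hC haB' hbC' ha'0 u huunit
    · rw [hDik]
      exact kron_quadform_le hρB.1 hρC.1 hB hC haB hbC u huunit
  -- trace identities
  have htraceρt : ρt.trace = 1 := by
    rw [hρt, Matrix.trace_mul_cycle, hU2, Matrix.one_mul, Matrix.trace_kronecker,
      hρB.2, hρC.2, mul_one]
  have hσBtrace : (ptraceC ρt).trace = 1 := by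
    rw [← htraceρt]
    simp [ptraceC, Matrix.trace, Matrix.diag, Fintype.sum_prod_type]
  have hsumB : htB.eigenvalues 0 + htB.eigenvalues 1 = 1 := by
    have h := sum_eigs_eq_trace htB
    rw [hσBtrace] at h
    have h2 := congrArg Complex.re h
    simp [Fin.sum_univ_two] at h2
    linarith
  have hsumb : hB.eigenvalues 0 + hB.eigenvalues 1 = 1 := by
    have h := sum_eigs_eq_trace hB
    rw [hρB.2] at h
    have h2 := congrArg Complex.re h
    simp [Fin.sum_univ_two] at h2
    linarith
  have hsumc : hC.eigenvalues 0 + hC.eigenvalues 1 = 1 := by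
    have h := sum_eigs_eq_trace hC
    rw [hρC.2] at h
    have h2 := congrArg Complex.re h
    simp [Fin.sum_univ_two] at h2
    linarith
  -- total sum of D is 1
  have htot : D 0 0 + D 0 1 + D 1 0 + D 1 1 = 1 := by
    have h0 := rowB 0
    have h1 := rowB 1
    rw [Fin.sum_univ_two] at h0 h1
    linarith [hsumB]
  -- relations between a, a' and the eigenvalues
  have haa' : a + a' = 1 := by
    rw [ha, ha', max_add_min]
    exact hsumb
  have hbb' : b + b' = 1 := by
    rw [hb, hb', max_add_min]
    exact hsumc
  have hab : a * b = 1 - a' - b' + a' * b' := by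
    have e1 : a = 1 - a' := by linarith
    have e2 : b = 1 - b' := by linarith
    rw [e1, e2]; ring
  -- the key inequality for every pair of indices
  have key00 : a' + b' ≤ htB.eigenvalues 0 + htC.eigenvalues 0 := by
    have r := rowB 0; have c := colC 0
    rw [Fin.sum_univ_two] at r c
    rw [r, c]
    linarith [(hbound 0 0).1, (hbound 1 1).2, htot, hab]
  have key01 : a' + b' ≤ htB.eigenvalues 0 + htC.eigenvalues 1 := by
    have r := rowB 0; have c := colC 1
    rw [Fin.sum_univ_two] at r c
    rw [r, c]
    linarith [(hbound 0 1).1, (hbound 1 0).2, htot, hab]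
  have key10 : a' + b' ≤ htB.eigenvalues 1 + htC.eigenvalues 0 := by
    have r := rowB 1; have c := colC 0
    rw [Fin.sum_univ_two] at r c
    rw [r, c]
    linarith [(hbound 1 0).1, (hbound 0 1).2, htot, hab]
  have key11 : a' + b' ≤ htB.eigenvalues 1 + htC.eigenvalues 1 := by
    have r := rowB 1; have c := colC 1
    rw [Fin.sum_univ_two] at r c
    rw [r, c]
    linarith [(hbound 1 1).1, (hbound 0 0).2, htot, hab]
  rcases min_cases (htB.eigenvalues 0) (htB.eigenvalues 1) with ⟨h1, _⟩ | ⟨h1, _⟩ <;>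
    rcases min_cases (htC.eigenvalues 0) (htC.eigenvalues 1) with ⟨h2, _⟩ | ⟨h2, _⟩ <;>
    rw [h1, h2]
  · exact key00
  · exact key01
  · exact key10
  · exact key11
end

section
/- Pure-state ergotropy gain curve for two qubits: if ρ_{BC} is pure and both qubits have gap E, then the marginals have equal spectra, and for any energy-conserving unitary the ergotropy gain and mutual information change satisfy E_G/(2E) = λ̃^B_0 − λ^B_0 and ΔI/2 = h(λ̃^B_0) − h(λ^B_0), where λ^B_0, λ̃^B_0 ∈ [1/2, 1] are the larger eigenvalues of the initial and final marginals of B, and h(x) = −x ln x − (1−x) ln(1−x) is the binary entropy. -/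
open Matrix Kronecker
open scoped ComplexOrder

open Classical in
noncomputable def vnEntropy {n : Type*} [Fintype n] [DecidableEq n]
    (ρ : Matrix n n ℂ) : ℝ :=
  if h : ρ.IsHermitian then -∑ i, h.eigenvalues i * Real.log (h.eigenvalues i) else 0

/-- Binary entropy `h(x) = −x ln x − (1−x) ln(1−x)`. -/
noncomputable def binEnt (x : ℝ) : ℝ := -x * Real.log x - (1 - x) * Real.log (1 - x)


section Aux
open Polynomial

lemma charpoly_fin_two' (M : Matrix (Fin 2) (Fin 2) ℂ) :
    M.charpoly = X^2 - C M.trace * X + C M.det := by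
  rw [Matrix.charpoly, Matrix.det_fin_two, Matrix.trace_fin_two, Matrix.det_fin_two]
  simp [charmatrix_apply_eq, charmatrix_apply_ne]
  ring

lemma max_formula {a b : ℝ} (hs : a + b = 1) :
    max a b = (1 + Real.sqrt (1 - 4 * (a * b))) / 2 := by
  have h2 : (a - b)^2 = 1 - 4 * (a*b) := by nlinarith
  have h1 : Real.sqrt (1 - 4 * (a*b)) = |a - b| := by
    rw [← h2, Real.sqrt_sq_eq_abs]
  rcases le_total a b with h | h
  · rw [max_eq_right h, h1, abs_of_nonpos (by linarith)]; linarith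
  · rw [max_eq_left h, h1, abs_of_nonneg (by linarith)]; linarith

lemma max_mem_Icc {a b : ℝ} (hs : a + b = 1) (ha : 0 ≤ a) (hb : 0 ≤ b) :
    max a b ∈ Set.Icc (1/2 : ℝ) 1 := by
  constructor <;> rcases le_total a b with h | h <;>
    simp only [max_eq_right h, max_eq_left h] <;> linarith

noncomputable def amp (ψ : Fin 2 × Fin 2 → ℂ) : Matrix (Fin 2) (Fin 2) ℂ :=
  Matrix.of fun i k => ψ (i, k)

lemma ptraceC_outer (ψ : Fin 2 × Fin 2 → ℂ) :
    ptraceC (outer ψ) = amp ψ * (amp ψ)ᴴ := by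
  ext i j
  simp [ptraceC, outer, amp, Matrix.mul_apply, Matrix.conjTranspose_apply]

lemma ptraceB_outer (ψ : Fin 2 × Fin 2 → ℂ) :
    ptraceB (outer ψ) = (amp ψ)ᵀ * ((amp ψ)ᵀ)ᴴ := by
  ext i j
  simp [ptraceB, outer, amp, Matrix.mul_apply, Matrix.conjTranspose_apply]

lemma det_marg (ψ : Fin 2 × Fin 2 → ℂ) :
    (ptraceC (outer ψ)).det = (ptraceB (outer ψ)).det := by
  rw [ptraceC_outer, ptraceB_outer]
  simp [Matrix.det_mul, Matrix.det_conjTranspose, Matrix.det_transpose]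

lemma trace_outer {n : Type*} [Fintype n] (ψ : n → ℂ) :
    Matrix.trace (outer ψ) = ((∑ p, ‖ψ p‖ ^ 2 : ℝ) : ℂ) := by
  simp [Matrix.trace, outer, Matrix.diag, Complex.mul_conj, Complex.sq_norm]

lemma trace_margC (ψ : Fin 2 × Fin 2 → ℂ) (hψ : ∑ p, ‖ψ p‖ ^ 2 = 1) :
    (ptraceC (outer ψ)).trace = 1 := by
  have : (ptraceC (outer ψ)).trace = Matrix.trace (outer ψ) := by
    simp [Matrix.trace, ptraceC, Matrix.diag, Fintype.sum_prod_type]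
  rw [this, trace_outer, hψ]; norm_num

lemma trace_margB (ψ : Fin 2 × Fin 2 → ℂ) (hψ : ∑ p, ‖ψ p‖ ^ 2 = 1) :
    (ptraceB (outer ψ)).trace = 1 := by
  have : (ptraceB (outer ψ)).trace = Matrix.trace (outer ψ) := by
    rw [Matrix.trace, Matrix.trace]
    rw [Fintype.sum_prod_type]
    simp [ptraceB, Matrix.diag, Fin.sum_univ_two]
    ring
  rw [this, trace_outer, hψ]; norm_num

lemma trace_eq_sum_eigs {n : Type*} [Fintype n] [DecidableEq n]
    {A : Matrix n n ℂ} (hA : A.IsHermitian) :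
    A.trace = ∑ i, (hA.eigenvalues i : ℂ) := by
  conv_lhs => rw [hA.spectral_theorem, Unitary.conjStarAlgAut_apply]
  rw [Matrix.trace_mul_cycle]
  have h1 : star (hA.eigenvectorUnitary : Matrix n n ℂ) * (hA.eigenvectorUnitary : Matrix n n ℂ) = 1 :=
    hA.eigenvectorUnitary.2.1
  rw [h1, Matrix.one_mul, Matrix.trace_diagonal]
  rfl

lemma eig_sum_one {ρ : Matrix (Fin 2) (Fin 2) ℂ} (h : ρ.IsHermitian)
    (htr : ρ.trace = 1) : h.eigenvalues 0 + h.eigenvalues 1 = 1 := by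
  have := trace_eq_sum_eigs h
  rw [htr, Fin.sum_univ_two] at this
  have := congrArg Complex.re this.symm
  simpa using this

lemma eig_prod_det {ρ : Matrix (Fin 2) (Fin 2) ℂ} (h : ρ.IsHermitian) :
    h.eigenvalues 0 * h.eigenvalues 1 = ρ.det.re := by
  have := h.det_eq_prod_eigenvalues
  rw [Fin.prod_univ_two] at this
  have := congrArg Complex.re this
  simp at this
  rw [this]

lemma max_eig_det {ρ : Matrix (Fin 2) (Fin 2) ℂ} (h : ρ.IsHermitian)
    (htr : ρ.trace = 1) :
    max (h.eigenvalues 0) (h.eigenvalues 1)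
      = (1 + Real.sqrt (1 - 4 * ρ.det.re)) / 2 := by
  rw [← eig_prod_det h]; exact max_formula (eig_sum_one h htr)

lemma trace_mul_diagE (E : ℝ) (M : Matrix (Fin 2) (Fin 2) ℂ) :
    Matrix.trace (M * Matrix.diagonal ![(0 : ℂ), (E : ℂ)]) = (E : ℂ) * M 1 1 := by
  simp [Matrix.trace, Matrix.diag, Matrix.mul_diagonal, Fin.sum_univ_two]
  ring

lemma swap_unitary : (!![0,1;1,0] : Matrix (Fin 2) (Fin 2) ℂ) ∈ Matrix.unitaryGroup (Fin 2) ℂ := by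
  constructor <;>
  · ext i j
    fin_cases i <;> fin_cases j <;>
      simp [Matrix.mul_apply, Fin.sum_univ_two, Matrix.one_apply, Matrix.star_apply]

lemma entry_lower (W : Matrix (Fin 2) (Fin 2) ℂ) (hW : W ∈ Matrix.unitaryGroup (Fin 2) ℂ)
    (d : Fin 2 → ℝ) :
    ∃ t0 t1 : ℝ, 0 ≤ t0 ∧ 0 ≤ t1 ∧ t0 + t1 = 1 ∧
      ((W * Matrix.diagonal ((RCLike.ofReal ∘ d : Fin 2 → ℂ)) * Wᴴ) 1 1).re
        = d 0 * t0 + d 1 * t1 := by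
  refine ⟨Complex.normSq (W 1 0), Complex.normSq (W 1 1),
    Complex.normSq_nonneg _, Complex.normSq_nonneg _, ?_, ?_⟩
  · have h1 : (W * Wᴴ) 1 1 = 1 := by
      have h := Matrix.mem_unitaryGroup_iff.mp hW
      rw [Matrix.star_eq_conjTranspose] at h
      rw [h]; simp [Matrix.one_apply]
    rw [Matrix.mul_apply, Fin.sum_univ_two] at h1
    have := congrArg Complex.re h1
    simpa [Matrix.conjTranspose_apply, Complex.mul_conj, ← Complex.ofReal_add] using this
  · simp [Matrix.mul_apply, Fin.sum_univ_two, Matrix.conjTranspose_apply,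
      Matrix.diagonal, Complex.add_re, Complex.mul_re, Complex.normSq_apply, RCLike.ofReal]
    ring

lemma ergotropy_qubit (E : ℝ) (hE : 0 < E) (ρ : Matrix (Fin 2) (Fin 2) ℂ)
    (hρ : ρ.PosSemidef) (htr : ρ.trace = 1) (h : ρ.IsHermitian) :
    ergotropy (Matrix.diagonal ![(0 : ℂ), (E : ℂ)]) ρ
      = (Matrix.trace (ρ * Matrix.diagonal ![(0 : ℂ), (E : ℂ)])).re
        - E * (1 - max (h.eigenvalues 0) (h.eigenvalues 1)) := by
  classical
  set lam := h.eigenvalues with hlam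
  set V : Matrix (Fin 2) (Fin 2) ℂ := (h.eigenvectorUnitary : Matrix (Fin 2) (Fin 2) ℂ) with hV
  have hVmem : V ∈ Matrix.unitaryGroup (Fin 2) ℂ := h.eigenvectorUnitary.2
  set D : Matrix (Fin 2) (Fin 2) ℂ := Matrix.diagonal ((RCLike.ofReal ∘ lam : Fin 2 → ℂ)) with hD
  have hspec : ρ = V * D * Vᴴ := by
    rw [hV, hD]
    simpa [Matrix.star_eq_conjTranspose] using h.spectral_theorem
  set S : Set ℝ := {x : ℝ | ∃ U ∈ Matrix.unitaryGroup (Fin 2) ℂ,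
      x = (Matrix.trace (U * ρ * star U * Matrix.diagonal ![(0 : ℂ), (E : ℂ)])).re} with hS
  have hDentry : ∀ (P : Matrix (Fin 2) (Fin 2) ℂ), P ∈ Matrix.unitaryGroup (Fin 2) ℂ →
      ∀ x, x = (Matrix.trace ((P * Vᴴ) * ρ * star (P * Vᴴ) * Matrix.diagonal ![(0 : ℂ), (E : ℂ)])).re →
      x = (((P * D * Pᴴ) 1 1).re) * E := by
    intro P hP x hx
    have hVV : Vᴴ * V = 1 := by
      have := Matrix.mem_unitaryGroup_iff'.mp hVmem
      rwa [Matrix.star_eq_conjTranspose] at this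
    have hred : (P * Vᴴ) * ρ * star (P * Vᴴ) = P * D * Pᴴ := by
      rw [hspec, Matrix.star_eq_conjTranspose]
      simp only [Matrix.conjTranspose_mul, Matrix.conjTranspose_conjTranspose]
      calc P * Vᴴ * (V * D * Vᴴ) * (V * Pᴴ)
          = P * ((Vᴴ * V) * D * (Vᴴ * V)) * Pᴴ := by noncomm_ring
        _ = P * D * Pᴴ := by rw [hVV]; noncomm_ring
    rw [hx, hred, trace_mul_diagE]
    simp [Complex.mul_re]
    ring
  have mem1 : E * lam 1 ∈ S := by
    refine ⟨1 * Vᴴ, mul_mem (one_mem _) ?_, ?_⟩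
    · exact (Matrix.mem_unitaryGroup_iff'.mpr (by
        have := Matrix.mem_unitaryGroup_iff.mp hVmem
        rw [Matrix.star_eq_conjTranspose] at this
        rw [Matrix.star_eq_conjTranspose, Matrix.conjTranspose_conjTranspose]
        exact this))
    · have := hDentry 1 (one_mem _) _ rfl
      rw [this]
      simp [hD, Matrix.diagonal_apply]
      ring
  have mem0 : E * lam 0 ∈ S := by
    refine ⟨!![0,1;1,0] * Vᴴ, mul_mem swap_unitary ?_, ?_⟩
    · exact (Matrix.mem_unitaryGroup_iff'.mpr (by
        have := Matrix.mem_unitaryGroup_iff.mp hVmem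
        rw [Matrix.star_eq_conjTranspose] at this
        rw [Matrix.star_eq_conjTranspose, Matrix.conjTranspose_conjTranspose]
        exact this))
    · have := hDentry !![0,1;1,0] swap_unitary _ rfl
      rw [this]
      simp [hD, Matrix.mul_apply, Fin.sum_univ_two, Matrix.diagonal_apply,
        Matrix.conjTranspose_apply, Matrix.vecMul, dotProduct]
      ring
  have hlow : ∀ x ∈ S, E * min (lam 0) (lam 1) ≤ x := by
    rintro x ⟨W, hW, hx⟩
    have hWmem : W * V ∈ Matrix.unitaryGroup (Fin 2) ℂ := mul_mem hW hVmem
    have hred : W * ρ * star W = (W * V) * D * (W * V)ᴴ := by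
      rw [hspec, Matrix.star_eq_conjTranspose]
      simp only [Matrix.conjTranspose_mul]
      noncomm_ring
    obtain ⟨t0, t1, ht0, ht1, hts, hte⟩ := entry_lower (W * V) hWmem lam
    rw [hx, hred, trace_mul_diagE]
    have hte' : (((W * V) * D * (W * V)ᴴ) 1 1).re = lam 0 * t0 + lam 1 * t1 := by
      rw [hD]; exact hte
    have heq : ((E:ℂ) * (((W * V) * D * (W * V)ᴴ) 1 1)).re
        = E * (lam 0 * t0 + lam 1 * t1) := by
      rw [Complex.re_ofReal_mul, hte']
    rw [heq]
    have h0 : min (lam 0) (lam 1) ≤ lam 0 := min_le_left _ _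
    have h1 : min (lam 0) (lam 1) ≤ lam 1 := min_le_right _ _
    have hm : min (lam 0) (lam 1) * t0 + min (lam 0) (lam 1) * t1 = min (lam 0) (lam 1) := by
      rw [← mul_add, hts, mul_one]
    have : min (lam 0) (lam 1) ≤ lam 0 * t0 + lam 1 * t1 := by
      nlinarith [mul_nonneg (sub_nonneg.mpr h0) ht0, mul_nonneg (sub_nonneg.mpr h1) ht1, hm]
    nlinarith
  have hsum : lam 0 + lam 1 = 1 := eig_sum_one h htr
  have hsInf : sInf S = E * min (lam 0) (lam 1) := by
    apply le_antisymm
    · rcases le_total (lam 0) (lam 1) with hle | hle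
      · rw [min_eq_left hle]; exact csInf_le ⟨E * min (lam 0) (lam 1), hlow⟩ mem0
      · rw [min_eq_right hle]; exact csInf_le ⟨E * min (lam 0) (lam 1), hlow⟩ mem1
    · exact le_csInf ⟨_, mem0⟩ hlow
  rw [ergotropy]
  rw [hsInf]
  have : min (lam 0) (lam 1) = 1 - max (lam 0) (lam 1) := by
    have := min_add_max (lam 0) (lam 1)
    linarith
  rw [this]

lemma trace_energy (E : ℝ) (ρ : Matrix (Fin 2 × Fin 2) (Fin 2 × Fin 2) ℂ) :
    Matrix.trace (ρ * (Matrix.diagonal ![(0 : ℂ), (E : ℂ)] ⊗ₖ (1 : Matrix (Fin 2) (Fin 2) ℂ)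
        + (1 : Matrix (Fin 2) (Fin 2) ℂ) ⊗ₖ Matrix.diagonal ![(0 : ℂ), (E : ℂ)]))
      = Matrix.trace (ptraceC ρ * Matrix.diagonal ![(0 : ℂ), (E : ℂ)])
        + Matrix.trace (ptraceB ρ * Matrix.diagonal ![(0 : ℂ), (E : ℂ)]) := by
  simp only [Matrix.trace, Matrix.diag, Matrix.mul_apply, Matrix.add_apply,
    Matrix.kroneckerMap_apply, ptraceC, ptraceB, Matrix.of_apply,
    Fintype.sum_prod_type, Fin.sum_univ_two, Matrix.one_apply, Matrix.diagonal_apply,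
    Finset.sum_add_distrib]
  norm_num
  ring

lemma outer_conj (U : Matrix (Fin 2 × Fin 2) (Fin 2 × Fin 2) ℂ) (φ : Fin 2 × Fin 2 → ℂ) :
    U * outer φ * star U = outer (U.mulVec φ) := by
  ext i j
  simp only [Matrix.mul_apply, outer, Matrix.of_apply, Matrix.star_apply,
    Matrix.mulVec, dotProduct, star_sum, star_mul', Finset.sum_mul,
    Finset.mul_sum, Matrix.star_eq_conjTranspose, Matrix.conjTranspose_apply]
  apply Finset.sum_congr rfl
  intro k _
  apply Finset.sum_congr rfl
  intro l _
  ring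

lemma trace_invariant (ρ H U : Matrix (Fin 2 × Fin 2) (Fin 2 × Fin 2) ℂ)
    (hU : U ∈ Matrix.unitaryGroup (Fin 2 × Fin 2) ℂ) (hcomm : U * H = H * U) :
    Matrix.trace (U * ρ * star U * H) = Matrix.trace (ρ * H) := by
  have h1 : star U * U = 1 := hU.1
  have e1 : U * ρ * star U * H = U * (ρ * (star U * H)) := by noncomm_ring
  rw [e1, Matrix.trace_mul_comm]
  have e2 : ρ * (star U * H) * U = ρ * (star U * (H * U)) := by noncomm_ring
  rw [e2, ← hcomm]
  have e3 : ρ * (star U * (U * H)) = ρ * (star U * U * H) := by noncomm_ring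
  rw [e3, h1, Matrix.one_mul]

lemma mulVec_normalized (U : Matrix (Fin 2 × Fin 2) (Fin 2 × Fin 2) ℂ)
    (hU : U ∈ Matrix.unitaryGroup (Fin 2 × Fin 2) ℂ) (φ : Fin 2 × Fin 2 → ℂ)
    (hφ : ∑ p, ‖φ p‖ ^ 2 = 1) :
    ∑ p, ‖U.mulVec φ p‖ ^ 2 = 1 := by
  have h1 : Matrix.trace (outer (U.mulVec φ)) = Matrix.trace (outer φ) := by
    rw [← outer_conj U φ, Matrix.trace_mul_comm, ← Matrix.mul_assoc, hU.1, Matrix.one_mul]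
  rw [trace_outer, trace_outer, hφ] at h1
  exact_mod_cast h1

lemma vn_qubit (ρ : Matrix (Fin 2) (Fin 2) ℂ) (h : ρ.IsHermitian)
    (hsum : h.eigenvalues 0 + h.eigenvalues 1 = 1) :
    vnEntropy ρ = binEnt (max (h.eigenvalues 0) (h.eigenvalues 1)) := by
  rw [vnEntropy, dif_pos h, Fin.sum_univ_two]
  rcases le_total (h.eigenvalues 0) (h.eigenvalues 1) with hle | hle
  · rw [max_eq_right hle, binEnt]
    have : (1:ℝ) - h.eigenvalues 1 = h.eigenvalues 0 := by linarith
    rw [this]; ring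
  · rw [max_eq_left hle, binEnt]
    have : (1:ℝ) - h.eigenvalues 0 = h.eigenvalues 1 := by linarith
    rw [this]; ring

end Aux

/-- Pure-state ergotropy gain curve for two qubits: the marginals of a
pure state have equal spectra, the larger marginal eigenvalues lie in `[1/2, 1]`, and for
an energy-conserving unitary, `E_G/(2E) = λ̃^B_0 − λ^B_0` and
`ΔI/2 = h(λ̃^B_0) − h(λ^B_0)`. -/
theorem pure_state_gain_curve (E : ℝ) (hE : 0 < E)
    (φ : Fin 2 × Fin 2 → ℂ) (hφ : ∑ p, ‖φ p‖ ^ 2 = 1)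
    (U : Matrix (Fin 2 × Fin 2) (Fin 2 × Fin 2) ℂ)
    (hU : U ∈ Matrix.unitaryGroup (Fin 2 × Fin 2) ℂ)
    (hcomm : U * (Matrix.diagonal ![(0 : ℂ), (E : ℂ)] ⊗ₖ (1 : Matrix (Fin 2) (Fin 2) ℂ)
        + (1 : Matrix (Fin 2) (Fin 2) ℂ) ⊗ₖ Matrix.diagonal ![(0 : ℂ), (E : ℂ)])
      = (Matrix.diagonal ![(0 : ℂ), (E : ℂ)] ⊗ₖ (1 : Matrix (Fin 2) (Fin 2) ℂ)
        + (1 : Matrix (Fin 2) (Fin 2) ℂ) ⊗ₖ Matrix.diagonal ![(0 : ℂ), (E : ℂ)]) * U)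
    (hB : (ptraceC (outer φ)).IsHermitian)
    (hC : (ptraceB (outer φ)).IsHermitian)
    (htB : (ptraceC (U * outer φ * star U)).IsHermitian)
    (htC : (ptraceB (U * outer φ * star U)).IsHermitian) :
    (ptraceC (outer φ)).charpoly = (ptraceB (outer φ)).charpoly
    ∧ max (hB.eigenvalues 0) (hB.eigenvalues 1) ∈ Set.Icc (1 / 2 : ℝ) 1
    ∧ max (htB.eigenvalues 0) (htB.eigenvalues 1) ∈ Set.Icc (1 / 2 : ℝ) 1
    ∧ (ergotropy (Matrix.diagonal ![(0 : ℂ), (E : ℂ)]) (ptraceC (U * outer φ * star U))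
        + ergotropy (Matrix.diagonal ![(0 : ℂ), (E : ℂ)]) (ptraceB (U * outer φ * star U))
        - ergotropy (Matrix.diagonal ![(0 : ℂ), (E : ℂ)]) (ptraceC (outer φ))
        - ergotropy (Matrix.diagonal ![(0 : ℂ), (E : ℂ)]) (ptraceB (outer φ)))
        / (2 * E)
      = max (htB.eigenvalues 0) (htB.eigenvalues 1)
        - max (hB.eigenvalues 0) (hB.eigenvalues 1)
    ∧ (vnEntropy (ptraceC (U * outer φ * star U)) + vnEntropy (ptraceB (U * outer φ * star U))
        - vnEntropy (ptraceC (outer φ)) - vnEntropy (ptraceB (outer φ))) / 2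
      = binEnt (max (htB.eigenvalues 0) (htB.eigenvalues 1))
        - binEnt (max (hB.eigenvalues 0) (hB.eigenvalues 1)) := by
  have houter : U * outer φ * star U = outer (U.mulVec φ) := outer_conj U φ
  have hψ : ∑ p, ‖U.mulVec φ p‖ ^ 2 = 1 := mulVec_normalized U hU φ hφ
  -- PSD and trace facts
  have psdB : (ptraceC (outer φ)).PosSemidef := by
    rw [ptraceC_outer]; exact Matrix.posSemidef_self_mul_conjTranspose _
  have psdC : (ptraceB (outer φ)).PosSemidef := by
    rw [ptraceB_outer]; exact Matrix.posSemidef_self_mul_conjTranspose _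
  have psdB' : (ptraceC (U * outer φ * star U)).PosSemidef := by
    rw [houter, ptraceC_outer]; exact Matrix.posSemidef_self_mul_conjTranspose _
  have psdC' : (ptraceB (U * outer φ * star U)).PosSemidef := by
    rw [houter, ptraceB_outer]; exact Matrix.posSemidef_self_mul_conjTranspose _
  have trB : (ptraceC (outer φ)).trace = 1 := trace_margC φ hφ
  have trC : (ptraceB (outer φ)).trace = 1 := trace_margB φ hφ
  have trB' : (ptraceC (U * outer φ * star U)).trace = 1 := by
    rw [houter]; exact trace_margC _ hψ
  have trC' : (ptraceB (U * outer φ * star U)).trace = 1 := by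
    rw [houter]; exact trace_margB _ hψ
  -- eigenvalue sums
  have sB := eig_sum_one hB trB
  have sC := eig_sum_one hC trC
  have stB := eig_sum_one htB trB'
  have stC := eig_sum_one htC trC'
  -- determinant equality of marginals
  have dBC : (ptraceC (outer φ)).det = (ptraceB (outer φ)).det := det_marg φ
  have dBC' : (ptraceC (U * outer φ * star U)).det
      = (ptraceB (U * outer φ * star U)).det := by
    rw [houter]; exact det_marg _
  -- equality of max eigenvalues across the two marginals
  have maxC_eq : max (hC.eigenvalues 0) (hC.eigenvalues 1)
      = max (hB.eigenvalues 0) (hB.eigenvalues 1) := by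
    rw [max_eig_det hC trC, max_eig_det hB trB, dBC]
  have maxtC_eq : max (htC.eigenvalues 0) (htC.eigenvalues 1)
      = max (htB.eigenvalues 0) (htB.eigenvalues 1) := by
    rw [max_eig_det htC trC', max_eig_det htB trB', dBC']
  refine ⟨?_, ?_, ?_, ?_, ?_⟩
  · -- charpoly equality
    rw [charpoly_fin_two', charpoly_fin_two', trB, trC, dBC]
  · exact max_mem_Icc sB (psdB.eigenvalues_nonneg 0) (psdB.eigenvalues_nonneg 1)
  · exact max_mem_Icc stB (psdB'.eigenvalues_nonneg 0) (psdB'.eigenvalues_nonneg 1)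
  · -- ergotropy gain
    have tsum : Matrix.trace (ptraceC (U * outer φ * star U) * Matrix.diagonal ![(0 : ℂ), (E : ℂ)])
          + Matrix.trace (ptraceB (U * outer φ * star U) * Matrix.diagonal ![(0 : ℂ), (E : ℂ)])
        = Matrix.trace (ptraceC (outer φ) * Matrix.diagonal ![(0 : ℂ), (E : ℂ)])
          + Matrix.trace (ptraceB (outer φ) * Matrix.diagonal ![(0 : ℂ), (E : ℂ)]) := by
      rw [← trace_energy E (U * outer φ * star U), ← trace_energy E (outer φ)]
      exact trace_invariant (outer φ) _ U hU hcomm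
    have tsum_re := congrArg Complex.re tsum
    rw [Complex.add_re, Complex.add_re] at tsum_re
    rw [ergotropy_qubit E hE _ psdB' trB' htB, ergotropy_qubit E hE _ psdC' trC' htC,
      ergotropy_qubit E hE _ psdB trB hB, ergotropy_qubit E hE _ psdC trC hC,
      maxtC_eq, maxC_eq]
    rw [div_eq_iff (by positivity : (2 * E) ≠ 0)]
    linear_combination tsum_re
  · -- entropy gain
    rw [vn_qubit _ htB stB, vn_qubit _ htC stC, vn_qubit _ hB sB, vn_qubit _ hC sC,
      maxtC_eq, maxC_eq]
    ring
end
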